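/- Let (g, t) be a construction in a construction space matching a pattern (p, v). Then for every decomposition Δ of (p, v) there exists a decomposition D of (g, t) such that D matches Δ. -/

import Mathlib

namespace RST

/-! ## Type systems -/

/-- A relation (given as a set of pairs) is a partial order on the set `Ty`. -/
def IsPartialOrderOn {U : Type*} (Ty : Set U) (le : Set (U × U)) : Prop :=
  (∀ p ∈ le, p.1 ∈ Ty ∧ p.2 ∈ Ty) ∧
  (∀ τ ∈ Ty, (τ, τ) ∈ le) ∧
  (∀ a b : U, (a, b) ∈ le → (b, a) ∈ le → a = b) ∧
  (∀ a b c : U, (a, b) ∈ le → (b, c) ∈ le → (a, c) ∈ le)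

/-- The subtype closure of `Ty'` in the type system `(Ty, le)`. -/
def subtypeClosure {U : Type*} (Ty : Set U) (le : Set (U × U)) (Ty' : Set U) : Set U :=
  {τ | τ ∈ Ty ∧ ∃ τ' ∈ Ty', (τ, τ') ∈ le}

/-- The set of all subtype closures of subsets of `Ty`. -/
def SC {U : Type*} (Ty : Set U) (le : Set (U × U)) : Set (Set U) :=
  {S | ∃ Ty' ⊆ Ty, S = subtypeClosure Ty le Ty'}

/-- The candidate order of an upper bound extension: the reflexive closure (on `Ty ∪ Tystar`)
of `le` together with the pairs `(τ, f S)` for `τ ∈ S ∈ SC Ty le`. -/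
def upperBoundRel {U : Type*} (Ty Tystar : Set U) (le : Set (U × U)) (f : Set U → U) :
    Set (U × U) :=
  (le ∪ {p : U × U | ∃ S ∈ SC Ty le, p.1 ∈ S ∧ p.2 = f S}) ∪
    {p : U × U | p.1 = p.2 ∧ p.1 ∈ Ty ∪ Tystar}

/-! ## Graphs -/

/-- A (raw) directed labelled bipartite graph: tokens `Tk`, configurators `Cf`, arrows `Arr`,
incidence, arrow indices and vertex labels all given relationally (as sets of pairs), so that
unions of graphs are componentwise unions. -/
structure PreGraph (V A L : Type*) where
  Tk : Set V
  Cf : Set V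
  Arr : Set A
  inc : Set (A × (V × V))
  ia : Set (A × ℕ)
  tl : Set (V × L)
  cl : Set (V × L)

variable {V A L : Type*}

instance : Union (PreGraph V A L) :=
  ⟨fun g h =>
    ⟨g.Tk ∪ h.Tk, g.Cf ∪ h.Cf, g.Arr ∪ h.Arr, g.inc ∪ h.inc, g.ia ∪ h.ia,
      g.tl ∪ h.tl, g.cl ∪ h.cl⟩⟩

def PreGraph.Subgraph (h g : PreGraph V A L) : Prop :=
  h.Tk ⊆ g.Tk ∧ h.Cf ⊆ g.Cf ∧ h.Arr ⊆ g.Arr ∧ h.inc ⊆ g.inc ∧ h.ia ⊆ g.ia ∧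
    h.tl ⊆ g.tl ∧ h.cl ⊆ g.cl

/-- The vertices adjacent to `u` (together with `u`). -/
def PreGraph.adjTo (g : PreGraph V A L) (u : V) : Set V :=
  {u} ∪ {v | ∃ a ∈ g.Arr, (a, (v, u)) ∈ g.inc ∨ (a, (u, v)) ∈ g.inc}

/-- The arrows incident to `u`. -/
def PreGraph.incidentArrows (g : PreGraph V A L) (u : V) : Set A :=
  {a | a ∈ g.Arr ∧ ∃ v, (a, (v, u)) ∈ g.inc ∨ (a, (u, v)) ∈ g.inc}

/-- The restriction of a graph to given vertex and arrow sets. -/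
def PreGraph.restrict (g : PreGraph V A L) (Vs : Set V) (As : Set A) : PreGraph V A L :=
  ⟨g.Tk ∩ Vs, g.Cf ∩ Vs, g.Arr ∩ As, {q | q ∈ g.inc ∧ q.1 ∈ As},
    {q | q ∈ g.ia ∧ q.1 ∈ As}, {q | q ∈ g.tl ∧ q.1 ∈ Vs}, {q | q ∈ g.cl ∧ q.1 ∈ Vs}⟩

/-- The neighbourhood of a vertex `u`. -/
def PreGraph.Nh (g : PreGraph V A L) (u : V) : PreGraph V A L :=
  g.restrict (g.adjTo u) (g.incidentArrows u)

/-- A set of pairs is (the graph of) a function with domain `D`. -/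
def IsFunctionOn {α β : Type*} (R : Set (α × β)) (D : Set α) : Prop :=
  (∀ p ∈ R, p.1 ∈ D) ∧ ∀ x ∈ D, ∃! y, (x, y) ∈ R

/-- A raw graph is a genuine directed labelled bipartite graph. -/
def IsGraph (g : PreGraph V A L) : Prop :=
  Disjoint g.Tk g.Cf ∧
  IsFunctionOn g.inc g.Arr ∧
  (∀ a v w, (a, (v, w)) ∈ g.inc → (v ∈ g.Tk ∧ w ∈ g.Cf) ∨ (v ∈ g.Cf ∧ w ∈ g.Tk)) ∧
  IsFunctionOn g.ia g.Arr ∧ IsFunctionOn g.tl g.Tk ∧ IsFunctionOn g.cl g.Cf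

/-- `ars` is the list of incoming arrows of `u`, listed in increasing index order
(the arrow at position `i` carries index `i+1`). -/
def InArrowSeq (g : PreGraph V A L) (u : V) (ars : List A) : Prop :=
  ars.Nodup ∧ (∀ a : A, a ∈ ars ↔ a ∈ g.Arr ∧ ∃ w, (a, (w, u)) ∈ g.inc) ∧
  ∀ (i : ℕ) (a : A), ars[i]? = some a → (a, i + 1) ∈ g.ia

/-- `t` is an output token of the configurator `u`. -/
def OutputTok (g : PreGraph V A L) (u t : V) : Prop :=
  ∃ a ∈ g.Arr, (a, (u, t)) ∈ g.inc

/-- `ts` is the input token-sequence of the configurator `u`. -/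
def InputTokSeq (g : PreGraph V A L) (u : V) (ts : List V) : Prop :=
  ∃ ars : List A, InArrowSeq g u ars ∧
    List.Forall₂ (fun a v => (a, (v, u)) ∈ g.inc) ars ts

/-- `τs` is the input type-sequence of the configurator `u`. -/
def InputTypeSeq (g : PreGraph V A L) (u : V) (τs : List L) : Prop :=
  ∃ ts : List V, InputTokSeq g u ts ∧ List.Forall₂ (fun v τ => (v, τ) ∈ g.tl) ts τs

/-- `g` is a configuration of the constructor `c` (with signature `(ins, out)`),
whose single configurator is `u`. -/
def IsConfiguration (le : Set (L × L)) (g : PreGraph V A L) (u : V) (c : L)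
    (ins : List L) (out : L) : Prop :=
  IsGraph g ∧ g.Cf = {u} ∧ (u, c) ∈ g.cl ∧
  g.Tk = {v | ∃ a ∈ g.Arr, (a, (v, u)) ∈ g.inc ∨ (a, (u, v)) ∈ g.inc} ∧
  (∃! a0 : A, a0 ∈ g.Arr ∧ ∃ w, (a0, (u, w)) ∈ g.inc) ∧
  (∀ a0 ∈ g.Arr, ∀ w : V, (a0, (u, w)) ∈ g.inc →
      (a0, 0) ∈ g.ia ∧ ∃ σ, (w, σ) ∈ g.tl ∧ (σ, out) ∈ le) ∧
  (∃ ars : List A, InArrowSeq g u ars ∧ ars.length = ins.length ∧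
    ∀ (i : ℕ) (a : A) (τ : L), ars[i]? = some a → ins[i]? = some τ →
      ∃ w σ, (a, (w, u)) ∈ g.inc ∧ (w, σ) ∈ g.tl ∧ (σ, τ) ∈ le)

/-- A structure graph for the constructor specification `(C, sig)` over types `(Ty, le)`. -/
def IsStructureGraph (Ty : Set L) (le : Set (L × L)) (C : Set L)
    (sig : Set (L × (List L × L))) (g : PreGraph V A L) : Prop :=
  IsGraph g ∧ (∀ x τ, (x, τ) ∈ g.tl → τ ∈ Ty) ∧
  ∀ u ∈ g.Cf, ∃ c ins out, (u, c) ∈ g.cl ∧ c ∈ C ∧ (c, (ins, out)) ∈ sig ∧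
    IsConfiguration le (g.Nh u) u c ins out

/-! ## Construction spaces -/

/-- The raw data of a construction space: a type system, a constructor specification and
a structure graph. -/
structure CSpace (V A L : Type*) where
  Ty : Set L
  le : Set (L × L)
  C : Set L
  sig : Set (L × (List L × L))
  G : PreGraph V A L

instance : Union (CSpace V A L) :=
  ⟨fun c d => ⟨c.Ty ∪ d.Ty, c.le ∪ d.le, c.C ∪ d.C, c.sig ∪ d.sig, c.G ∪ d.G⟩⟩

/-- The raw data forms a genuine construction space. -/
def IsCSpace (Cs : CSpace V A L) : Prop :=
  IsPartialOrderOn Cs.Ty Cs.le ∧ Disjoint Cs.C Cs.Ty ∧ IsFunctionOn Cs.sig Cs.C ∧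
  (∀ c ins out, (c, (ins, out)) ∈ Cs.sig →
      ins ≠ [] ∧ (∀ τ ∈ ins, τ ∈ Cs.Ty) ∧ out ∈ Cs.Ty) ∧
  IsStructureGraph Cs.Ty Cs.le Cs.C Cs.sig Cs.G

/-- Token-functionality of the constructors of a structure graph. -/
def TokenFunctional (g : PreGraph V A L) : Prop :=
  ∀ u u' c, u ∈ g.Cf → u' ∈ g.Cf → (u, c) ∈ g.cl → (u', c) ∈ g.cl →
    ∀ ts, InputTokSeq g u ts → InputTokSeq g u' ts →
      ∀ t t', OutputTok g u t → OutputTok g u' t' → t = t'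

/-- Type-functionality of the constructors of a structure graph. -/
def TypeFunctional (g : PreGraph V A L) : Prop :=
  ∀ u u' c, u ∈ g.Cf → u' ∈ g.Cf → (u, c) ∈ g.cl → (u', c) ∈ g.cl →
    ∀ τs, InputTypeSeq g u τs → InputTypeSeq g u' τs →
      ∀ t t' τ τ', OutputTok g u t → OutputTok g u' t' →
        (t, τ) ∈ g.tl → (t', τ') ∈ g.tl → τ = τ'

def IsFunctionalGraph (g : PreGraph V A L) : Prop :=
  TokenFunctional g ∧ TypeFunctional g

/-! ## Representational systems -/

/-- The raw data of a representational system: grammatical, entailment and identification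
spaces. -/
structure RSystem (V A L : Type*) where
  Gs : CSpace V A L
  Es : CSpace V A L
  Is : CSpace V A L

instance : Union (RSystem V A L) :=
  ⟨fun r s => ⟨r.Gs ∪ s.Gs, r.Es ∪ s.Es, r.Is ∪ s.Is⟩⟩

/-- The universal space of a representational system. -/
def RSystem.uspace (R : RSystem V A L) : CSpace V A L := (R.Gs ∪ R.Es) ∪ R.Is

/-- `R` is a representational system formed over the type system `(Ty, le)` and the
meta-type system `(MTy, Mle)`. -/
def IsRSystem (R : RSystem V A L) (Ty : Set L) (le : Set (L × L))
    (MTy : Set L) (Mle : Set (L × L)) : Prop :=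
  IsPartialOrderOn Ty le ∧ IsPartialOrderOn MTy Mle ∧
  IsPartialOrderOn (Ty ∪ MTy) (le ∪ Mle) ∧
  R.Gs.Ty = Ty ∧ R.Gs.le = le ∧ IsCSpace R.Gs ∧ IsFunctionalGraph R.Gs.G ∧
  R.Es.Ty = Ty ∧ R.Es.le = le ∧ IsCSpace R.Es ∧ R.Es.G.Tk ⊆ R.Gs.G.Tk ∧
  R.Is.Ty = Ty ∪ MTy ∧ R.Is.le = le ∪ Mle ∧ IsCSpace R.Is ∧
  (∀ x ∈ R.Is.G.Tk, x ∉ R.Gs.G.Tk → ∃ τ ∈ MTy, (x, τ) ∈ R.Is.G.tl) ∧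
  (∀ x ∈ R.Is.G.Tk, (∃ u ∈ R.Is.G.Cf, OutputTok R.Is.G u x) → x ∉ R.Gs.G.Tk) ∧
  IsCSpace (R.Gs ∪ R.Es) ∧ IsCSpace (R.Gs ∪ R.Is) ∧ IsCSpace (R.Es ∪ R.Is) ∧
  Disjoint R.Gs.C R.Es.C ∧ Disjoint R.Gs.C R.Is.C ∧ Disjoint R.Es.C R.Is.C

/-- `(R, R', Is'')` is an inter-representational-system encoding, where `R` is formed over
`(Ty, le)` and `(MTy, Mle)`, `R'` over `(Ty', le')` and `(MTy', Mle')`, and `Is''` is an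
identification space formed over `(Ty ∪ Ty', le ∪ le')` and `(MTy'', Mle'')`. -/
def IsIRSE (R R' : RSystem V A L) (Is'' : CSpace V A L)
    (Ty : Set L) (le : Set (L × L)) (MTy : Set L) (Mle : Set (L × L))
    (Ty' : Set L) (le' : Set (L × L)) (MTy' : Set L) (Mle' : Set (L × L))
    (MTy'' : Set L) (Mle'' : Set (L × L)) : Prop :=
  IsRSystem R Ty le MTy Mle ∧ IsRSystem R' Ty' le' MTy' Mle' ∧
  IsRSystem (R ∪ R') (Ty ∪ Ty') (le ∪ le') (MTy ∪ MTy') (Mle ∪ Mle') ∧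
  IsPartialOrderOn MTy'' Mle'' ∧
  IsPartialOrderOn ((Ty ∪ Ty') ∪ MTy'') ((le ∪ le') ∪ Mle'') ∧
  Is''.Ty = (Ty ∪ Ty') ∪ MTy'' ∧ Is''.le = (le ∪ le') ∪ Mle'' ∧ IsCSpace Is'' ∧
  MTy ∪ MTy' ⊆ MTy'' ∧ Mle ∪ Mle' ⊆ Mle'' ∧
  (∀ x ∈ Is''.G.Tk, x ∉ (R.Gs ∪ R'.Gs).G.Tk → ∃ τ ∈ MTy'', (x, τ) ∈ Is''.G.tl) ∧
  (∀ x ∈ Is''.G.Tk, (∃ u ∈ Is''.G.Cf, OutputTok Is''.G u x) →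
      x ∉ (R.Gs ∪ R'.Gs).G.Tk) ∧
  IsCSpace ((R.Gs ∪ R'.Gs) ∪ Is'') ∧ IsCSpace ((R.Es ∪ R'.Es) ∪ Is'') ∧
  IsCSpace ((R.Is ∪ R'.Is) ∪ Is'') ∧
  Disjoint Is''.C (R.Gs ∪ R'.Gs).C ∧ Disjoint Is''.C (R.Es ∪ R'.Es).C ∧
  Disjoint Is''.C (R.Is ∪ R'.Is).C

/-! ## Trails -/

/-- A trail candidate: a list of arrows together with an associated source and target vertex
(needed for the empty trail `[]_v`). -/
structure Trail (V A : Type*) where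
  arrows : List A
  src : V
  tgt : V

/-- The empty trail `[]_v`. -/
def Trail.nil {V A : Type*} (v : V) : Trail V A := ⟨[], v, v⟩

/-- Concatenation `e ⊕ w` of trails. -/
def Trail.append {V A : Type*} (e w : Trail V A) : Trail V A :=
  ⟨e.arrows ++ w.arrows, e.src, w.tgt⟩

/-- The image of a trail under vertex/arrow maps. -/
def Trail.map {V A : Type*} (fv : V → V) (fa : A → A) (tr : Trail V A) : Trail V A :=
  ⟨tr.arrows.map fa, fv tr.src, fv tr.tgt⟩

/-- The arrows chain through the graph from `s` to `t`. -/
def ChainIn (g : PreGraph V A L) : List A → V → V → Prop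
  | [], s, t => s = t
  | a :: rest, s, t => a ∈ g.Arr ∧ ∃ m, (a, (s, m)) ∈ g.inc ∧ ChainIn g rest m t

/-- `tr` is a trail in `g`. -/
def IsTrailIn (g : PreGraph V A L) (tr : Trail V A) : Prop :=
  tr.arrows.Nodup ∧ ChainIn g tr.arrows tr.src tr.tgt ∧
  tr.src ∈ g.Tk ∪ g.Cf ∧ tr.tgt ∈ g.Tk ∪ g.Cf

/-- A trail is well-formed provided its source and target are tokens. -/
def WellFormed (g : PreGraph V A L) (tr : Trail V A) : Prop :=
  tr.src ∈ g.Tk ∧ tr.tgt ∈ g.Tk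

/-- `tr` is (source-)extendable by the arrow `a`. -/
def ExtendableBy (g : PreGraph V A L) (tr : Trail V A) (a : A) : Prop :=
  a ∈ g.Arr ∧ a ∉ tr.arrows ∧ ∃ s, (a, (s, tr.src)) ∈ g.inc

def Extendable (g : PreGraph V A L) (tr : Trail V A) : Prop :=
  ∃ a, ExtendableBy g tr a

def NonExtendable (g : PreGraph V A L) (tr : Trail V A) : Prop :=
  ¬ Extendable g tr

/-- `TES g tr S` holds iff `S` is the trail extension sequence of the trail `tr` in `g`,
following the recursive definition of TES. -/
inductive TES (g : PreGraph V A L) : Trail V A → List (Trail V A) → Prop where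
  | nonext (tr : Trail V A) (h : NonExtendable g tr) :
      TES g tr [⟨[], tr.src, tr.src⟩]
  | ext (tr : Trail V A) (a : A) (u : V) (ars : List A)
      (Ss : List (List (Trail V A)))
      (hext : ExtendableBy g tr a)
      (hinc : (a, (u, tr.src)) ∈ g.inc)
      (hars : InArrowSeq g u ars)
      (hlen : Ss.length = ars.length)
      (hrec : ∀ (i : ℕ) (ai : A) (si : V) (Si : List (Trail V A)),
          ars[i]? = some ai → Ss[i]? = some Si → (ai, (si, u)) ∈ g.inc →
          TES g ⟨ai :: a :: tr.arrows, si, tr.tgt⟩ Si) :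
      TES g tr (List.flatten (List.zipWith
        (fun (ai : A) (Si : List (Trail V A)) =>
          Si.map (fun e => (⟨e.arrows ++ [ai, a], e.src, tr.src⟩ : Trail V A)))
        ars Ss))

/-- The sequence of sources of a sequence of trails. -/
def srcSeq {V A : Type*} (S : List (Trail V A)) : List V := S.map Trail.src

/-- The right product `S ◁ w`, appending the trail `w` to each trail in `S`. -/
def rprod {V A : Type*} (S : List (Trail V A)) (w : Trail V A) : List (Trail V A) :=
  S.map fun e => e.append w

/-! ## Constructions -/

/-- Every token is the target of at most one arrow. -/
def UniStructured (g : PreGraph V A L) : Prop :=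
  ∀ x ∈ g.Tk, ∀ a ∈ g.Arr, ∀ b ∈ g.Arr,
    (∃ w, (a, (w, x)) ∈ g.inc) → (∃ w, (b, (w, x)) ∈ g.inc) → a = b

/-- `(g, t)` is a construction in the construction space `Cs`: `g` is a finite uni-structured
structure graph (a subgraph of the structure graph of `Cs`), `t` is a token of `g`, and every
vertex of `g` is the source of a trail targeting `t`. -/
def IsConstruction (Cs : CSpace V A L) (g : PreGraph V A L) (t : V) : Prop :=
  g.Subgraph Cs.G ∧ IsStructureGraph Cs.Ty Cs.le Cs.C Cs.sig g ∧
  g.Tk.Finite ∧ g.Cf.Finite ∧ g.Arr.Finite ∧ UniStructured g ∧ t ∈ g.Tk ∧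
  ∀ v ∈ g.Tk ∪ g.Cf, ∃ tr : Trail V A, IsTrailIn g tr ∧ tr.src = v ∧ tr.tgt = t

/-- `(g, t)` is a construction *in* `Cs` in the strong sense: moreover every configurator of `g`
has its full neighbourhood from the structure graph of `Cs`. -/
def IsConstructionIn (Cs : CSpace V A L) (g : PreGraph V A L) (t : V) : Prop :=
  IsConstruction Cs g t ∧ ∀ u ∈ g.Cf, g.Nh u = Cs.G.Nh u

/-- A trivial construction: the construct is its only vertex. -/
def TrivialC (g : PreGraph V A L) (t : V) : Prop := g.Tk ∪ g.Cf = {t}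

/-- A basic construction: exactly one configurator. -/
def BasicC (g : PreGraph V A L) : Prop := ∃ u, g.Cf = {u}

/-- The set of arrows occurring in a sequence of trails. -/
def trailArrowSet {V A : Type*} (TR : List (Trail V A)) : Set A :=
  {a | ∃ tr ∈ TR, a ∈ tr.arrows}

/-- The vertices of the `TR`-graph: vertices incident to arrows of trails of `TR`,
together with the associated vertex of any empty trail of `TR`. -/
def trailVertexSet (g : PreGraph V A L) (TR : List (Trail V A)) : Set V :=
  {v | (∃ a ∈ trailArrowSet TR, ∃ w, (a, (v, w)) ∈ g.inc ∨ (a, (w, v)) ∈ g.inc) ∨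
    ∃ tr ∈ TR, tr.arrows = [] ∧ tr.src = v}

/-- The `TR`-graph `v(TR)`. -/
def trGraph (g : PreGraph V A L) (TR : List (Trail V A)) : PreGraph V A L :=
  g.restrict (trailVertexSet g TR) (trailArrowSet TR)

/-- `((g', t), ics)` is a split of the construction `(g, t)`: `(g', t)` is a generator and
`ics` is the corresponding induced construction sequence (each induced construction is
`(v(TES(tri)), source(tri))`, the TES being computed in `(g, t)`). -/
def IsSplit (Cs : CSpace V A L) (g : PreGraph V A L) (t : V)
    (g' : PreGraph V A L) (ics : List (PreGraph V A L × V)) : Prop :=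
  IsConstruction Cs g' t ∧ g'.Subgraph g ∧
  ∃ trs : List (Trail V A), TES g' (Trail.nil t) trs ∧ ics.length = trs.length ∧
    ∀ (i : ℕ) (tri : Trail V A), trs[i]? = some tri →
      ∃ Si : List (Trail V A), TES g tri Si ∧ ics[i]? = some (trGraph g Si, tri.src)

/-! ## Decompositions -/

/-- A decomposition tree: vertices labelled by a graph and a token, with the incoming arrows
of every vertex given in index order by a list of subtrees. -/
inductive DTree (V A L : Type*) where
  | node : PreGraph V A L → V → List (DTree V A L) → DTree V A L

def DTree.rootGraph : DTree V A L → PreGraph V A L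
  | .node g _ _ => g

def DTree.rootTok : DTree V A L → V
  | .node _ t _ => t

def DTree.kids : DTree V A L → List (DTree V A L)
  | .node _ _ cs => cs

/-- `IsDecompositionOf Cs D g t` holds iff `D` is a decomposition of the construction
`(g, t)` in `Cs`. -/
inductive IsDecompositionOf (Cs : CSpace V A L) : DTree V A L → PreGraph V A L → V → Prop where
  | single (g : PreGraph V A L) (t : V) (h : IsConstruction Cs g t) :
      IsDecompositionOf Cs (.node g t []) g t
  | split (g : PreGraph V A L) (t : V) (g' : PreGraph V A L)
      (ics : List (PreGraph V A L × V)) (cs : List (DTree V A L))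
      (hc : IsConstruction Cs g t)
      (hsplit : IsSplit Cs g t g' ics)
      (hlen : cs.length = ics.length)
      (hrec : ∀ (i : ℕ) (ci : DTree V A L) (gi : PreGraph V A L) (ti : V),
          cs[i]? = some ci → ics[i]? = some (gi, ti) → IsDecompositionOf Cs ci gi ti) :
      IsDecompositionOf Cs (.node g' t cs) g t

/-- `LcsRel D ls` holds iff `ls` is the leaf construction-sequence of `D`. -/
inductive LcsRel : DTree V A L → List (PreGraph V A L × V) → Prop where
  | leaf (g : PreGraph V A L) (t : V) : LcsRel (.node g t []) [(g, t)]
  | node (g : PreGraph V A L) (t : V) (cs : List (DTree V A L))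
      (ls : List (List (PreGraph V A L × V)))
      (hne : cs ≠ []) (hlen : ls.length = cs.length)
      (h : ∀ (i : ℕ) (ci : DTree V A L) (li : List (PreGraph V A L × V)),
          cs[i]? = some ci → ls[i]? = some li → LcsRel ci li) :
      LcsRel (.node g t cs) ls.flatten

/-- `(p, w)` is one of the constructions labelling a vertex of the decomposition tree. -/
inductive LabelOf : DTree V A L → PreGraph V A L → V → Prop where
  | root (g : PreGraph V A L) (t : V) (cs : List (DTree V A L)) :
      LabelOf (.node g t cs) g t
  | child (g : PreGraph V A L) (t : V) (cs : List (DTree V A L))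
      (c : DTree V A L) (p : PreGraph V A L) (w : V) :
      c ∈ cs → LabelOf c p w → LabelOf (.node g t cs) p w

/-- The union of all the graphs labelling vertices of the decomposition tree
(the graph of the construction `ct(D)` of the decomposition `D`). -/
def DTree.ctGraph (D : DTree V A L) : PreGraph V A L :=
  ⟨{x | ∃ p w, LabelOf D p w ∧ x ∈ p.Tk},
   {x | ∃ p w, LabelOf D p w ∧ x ∈ p.Cf},
   {a | ∃ p w, LabelOf D p w ∧ a ∈ p.Arr},
   {q | ∃ p w, LabelOf D p w ∧ q ∈ p.inc},
   {q | ∃ p w, LabelOf D p w ∧ q ∈ p.ia},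
   {q | ∃ p w, LabelOf D p w ∧ q ∈ p.tl},
   {q | ∃ p w, LabelOf D p w ∧ q ∈ p.cl}⟩

/-- Every vertex label of the decomposition tree satisfies `P`. -/
inductive AllLabels (P : PreGraph V A L → V → Prop) : DTree V A L → Prop where
  | node (g : PreGraph V A L) (t : V) (cs : List (DTree V A L)) :
      P g t → (∀ c, c ∈ cs → AllLabels P c) → AllLabels P (.node g t cs)

/-- The subtree of a decomposition tree at a given position (a path of child indices). -/
def subtreeAt : List ℕ → DTree V A L → Option (DTree V A L)
  | [], D => some D
  | i :: rest, .node _ _ cs =>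
    match cs[i]? with
    | some c => subtreeAt rest c
    | none => none

/-! ## Patterns and embeddings -/

/-- An embedding of the graph `g` into the graph `p`: an isomorphism preserving arrow indices
and configurator labels, with token labels respecting the subtype relation `le`. -/
def IsEmbedding (le : Set (L × L)) (g p : PreGraph V A L) (fv : V → V) (fa : A → A) : Prop :=
  (∀ x ∈ g.Tk, fv x ∈ p.Tk) ∧ (∀ x ∈ g.Cf, fv x ∈ p.Cf) ∧
  (∀ x ∈ g.Tk ∪ g.Cf, ∀ y ∈ g.Tk ∪ g.Cf, fv x = fv y → x = y) ∧
  (∀ y ∈ p.Tk, ∃ x ∈ g.Tk, fv x = y) ∧ (∀ y ∈ p.Cf, ∃ x ∈ g.Cf, fv x = y) ∧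
  (∀ a ∈ g.Arr, fa a ∈ p.Arr) ∧
  (∀ a ∈ g.Arr, ∀ b ∈ g.Arr, fa a = fa b → a = b) ∧
  (∀ b ∈ p.Arr, ∃ a ∈ g.Arr, fa a = b) ∧
  (∀ a v w, (a, (v, w)) ∈ g.inc → (fa a, (fv v, fv w)) ∈ p.inc) ∧
  (∀ a n, (a, n) ∈ g.ia → (fa a, n) ∈ p.ia) ∧
  (∀ u c, (u, c) ∈ g.cl → (fv u, c) ∈ p.cl) ∧
  (∀ x τ, (x, τ) ∈ g.tl → ∃ σ, (fv x, σ) ∈ p.tl ∧ (τ, σ) ∈ le)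

/-- The construction `(g, t)` matches the pattern `(p, v)`. -/
def MatchesPattern (le : Set (L × L)) (g : PreGraph V A L) (t : V)
    (p : PreGraph V A L) (v : V) : Prop :=
  ∃ fv fa, IsEmbedding le g p fv fa ∧ fv t = v

/-- `Ps` is a pattern space for `Cs`: a construction space over the same type system and
constructor specification such that every construction of `Cs` matches some construction
of `Ps`. -/
def IsPatternSpace (Cs Ps : CSpace V A L) : Prop :=
  Ps.Ty = Cs.Ty ∧ Ps.le = Cs.le ∧ Ps.C = Cs.C ∧ Ps.sig = Cs.sig ∧ IsCSpace Ps ∧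
  ∀ g t, IsConstruction Cs g t →
    ∃ p v, IsConstruction Ps p v ∧ MatchesPattern Cs.le g t p v

/-- Vertex-wise matching of two same-shape decomposition trees under a common pair of maps. -/
inductive DMatches (le : Set (L × L)) (fv : V → V) (fa : A → A) :
    DTree V A L → DTree V A L → Prop where
  | node (g : PreGraph V A L) (t : V) (p : PreGraph V A L) (v : V)
      (cs ds : List (DTree V A L))
      (hemb : IsEmbedding le g p fv fa) (ht : fv t = v)
      (hlen : cs.length = ds.length)
      (hrec : ∀ (i : ℕ) (ci di : DTree V A L), cs[i]? = some ci → ds[i]? = some di →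
          DMatches le fv fa ci di) :
      DMatches le fv fa (.node g t cs) (.node p v ds)

/-- The decomposition `D` matches the (pattern) decomposition `Δ`: there is an arrow-index
preserving isomorphism of trees together with an embedding of `ct(D)` into `ct(Δ)` whose
restriction to each vertex label is an embedding into the corresponding pattern label. -/
def DecompositionMatches (le : Set (L × L)) (D Δ : DTree V A L) : Prop :=
  ∃ fv fa, IsEmbedding le D.ctGraph Δ.ctGraph fv fa ∧ fv D.rootTok = Δ.rootTok ∧
    DMatches le fv fa D Δ

/-! ## Descriptions -/

/-- A description: a set of decompositions of patterns (constructions in the pattern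
space `Ps`). -/
def IsDescriptionOf (Ps : CSpace V A L) (Ds : Set (DTree V A L)) : Prop :=
  ∀ Δ ∈ Ds, ∃ p v, IsConstruction Ps p v ∧ IsDecompositionOf Ps Δ p v

/-- The description `Ds` is complete for `Cs`. -/
def CompleteDescription (Cs : CSpace V A L) (Ds : Set (DTree V A L)) : Prop :=
  ∀ g t, IsConstruction Cs g t →
    ∃ Δ ∈ Ds, ∃ D, IsDecompositionOf Cs D g t ∧ DecompositionMatches Cs.le D Δ

/-- The set of patterns labelling vertices of decompositions in `Ds`. -/
def PatternsOf (Ds : Set (DTree V A L)) : Set (PreGraph V A L × V) :=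
  {pv | ∃ Δ ∈ Ds, LabelOf Δ pv.1 pv.2}

/-- Label-preserving isomorphism of patterns/constructions. -/
def LabelIsomorphic (g : PreGraph V A L) (t : V) (p : PreGraph V A L) (v : V) : Prop :=
  ∃ fv fa, IsEmbedding {q : L × L | q.1 = q.2} g p fv fa ∧ fv t = v

/-- The description `Ds` is compact: finitely many patterns up to label-preserving
isomorphism. -/
def CompactDescription (Ds : Set (DTree V A L)) : Prop :=
  ∃ Reps : Set (PreGraph V A L × V), Reps.Finite ∧
    ∀ pv ∈ PatternsOf Ds, ∃ qw ∈ Reps, LabelIsomorphic pv.1 pv.2 qw.1 qw.2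

/-! ## Transformation constraints and structural transformations -/

/-- A transformation-constraint-shaped triple: two patterns (or constructions) together with
a set of patterns (or constructions). -/
structure TConstraint (V A L : Type*) where
  pa : PreGraph V A L
  ca : V
  pb : PreGraph V A L
  cb : V
  Pc : Set (PreGraph V A L × V)

/-- The union of the graphs of a set of patterns. -/
def pGraph (P : Set (PreGraph V A L × V)) : PreGraph V A L :=
  ⟨{x | ∃ pv ∈ P, x ∈ pv.1.Tk}, {x | ∃ pv ∈ P, x ∈ pv.1.Cf},
   {a | ∃ pv ∈ P, a ∈ pv.1.Arr}, {q | ∃ pv ∈ P, q ∈ pv.1.inc},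
   {q | ∃ pv ∈ P, q ∈ pv.1.ia}, {q | ∃ pv ∈ P, q ∈ pv.1.tl},
   {q | ∃ pv ∈ P, q ∈ pv.1.cl}⟩

/-- A respectful embedding of the set of patterns `P` into the set of patterns `P'`. -/
def RespectfulEmbedding (le : Set (L × L)) (P P' : Set (PreGraph V A L × V))
    (fv : V → V) (fa : A → A) : Prop :=
  IsEmbedding le (pGraph P) (pGraph P') fv fa ∧
  ∀ pv ∈ P, ∃ qw ∈ P', IsEmbedding le pv.1 qw.1 fv fa ∧ fv pv.2 = qw.2

/-- Satisfaction of one transformation-constraint-shaped triple by another: embeddings of the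
first two components, a respectful embedding of the third, whose common underlying maps give
an isomorphism of the unions of the graphs. -/
def TCSatisfies (le : Set (L × L)) (s s' : TConstraint V A L) : Prop :=
  ∃ fv fa,
    IsEmbedding le s.pa s'.pa fv fa ∧ fv s.ca = s'.ca ∧
    IsEmbedding le s.pb s'.pb fv fa ∧ fv s.cb = s'.cb ∧
    RespectfulEmbedding le s.Pc s'.Pc fv fa ∧
    IsEmbedding le ((s.pa ∪ s.pb) ∪ pGraph s.Pc) ((s'.pa ∪ s'.pb) ∪ pGraph s'.Pc) fv fa

/-- A transformation constraint for an encoding described by `(Ds, Ds', P'')`. -/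
def IsTransformationConstraint (Ds Ds' : Set (DTree V A L))
    (P'' : Set (PreGraph V A L × V)) (s : TConstraint V A L) : Prop :=
  (s.pa, s.ca) ∈ PatternsOf Ds ∧ (s.pb, s.cb) ∈ PatternsOf Ds' ∧ s.Pc ⊆ P''

/-- A constraint assignment for `Δ` and `Δ'`: a partial function (modelled with `Option`) on
pairs of vertices (paths) whose values are transformation constraints from `S0` matched by the
corresponding labels. -/
def IsConstraintAssignment (leR leR' : Set (L × L)) (S0 : Set (TConstraint V A L))
    (Δ Δ' : DTree V A L) (Lm : List ℕ → List ℕ → Option (TConstraint V A L)) : Prop :=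
  ∀ pi pi' s, Lm pi pi' = some s → s ∈ S0 ∧
    (∃ δ, subtreeAt pi Δ = some δ ∧
        MatchesPattern leR δ.rootGraph δ.rootTok s.pa s.ca) ∧
    (∃ δ', subtreeAt pi' Δ' = some δ' ∧
        MatchesPattern leR' δ'.rootGraph δ'.rootTok s.pb s.cb)

/-- The constraint assignment `Lm` is satisfied by the pair of decompositions `(D, D')`
(whose vertices correspond, via the shape-preserving matchings, to those of `Δ`, `Δ'`). -/
def LSatisfiedBy (leI : Set (L × L)) (Ip : CSpace V A L)
    (Lm : List ℕ → List ℕ → Option (TConstraint V A L)) (D D' : DTree V A L) : Prop :=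
  ∀ pi pi' s d d', Lm pi pi' = some s →
    subtreeAt pi D = some d → subtreeAt pi' D' = some d' →
    ∃ Cset : Set (PreGraph V A L × V),
      (∀ pv ∈ Cset, IsConstruction Ip pv.1 pv.2) ∧
      TCSatisfies leI ⟨d.rootGraph, d.rootTok, d'.rootGraph, d'.rootTok, Cset⟩ s

/-- `(g', t')` is a structural `L`-transformation of `(g, t)` (with respect to the pattern
decompositions `Δ`, `Δ'` for the universal spaces `Ru`, `Ru'` and the inter-property
identification space `Ip`). -/
def IsStructuralLTransformation (Ru Ru' Ip : CSpace V A L) (Δ Δ' : DTree V A L)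
    (Lm : List ℕ → List ℕ → Option (TConstraint V A L))
    (g : PreGraph V A L) (t : V) (g' : PreGraph V A L) (t' : V) : Prop :=
  (∃ D, IsDecompositionOf Ru D g t ∧ DecompositionMatches Ru.le D Δ) ∧
  (∃ D', IsDecompositionOf Ru' D' g' t' ∧ DecompositionMatches Ru'.le D' Δ') ∧
  ∀ D D', IsDecompositionOf Ru D g t → DecompositionMatches Ru.le D Δ →
    IsDecompositionOf Ru' D' g' t' → DecompositionMatches Ru'.le D' Δ' →
    LSatisfiedBy Ip.le Ip Lm D D'

/-- Partial satisfaction: the constraint is only checked at vertices of the pattern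
decomposition `Δh` whose label is already a construction in `Ru'`. -/
def LPartialSatisfiedBy (leI : Set (L × L)) (Ip Ru' : CSpace V A L)
    (Lm : List ℕ → List ℕ → Option (TConstraint V A L)) (D Δh : DTree V A L) : Prop :=
  ∀ pi pi' s d δh, Lm pi pi' = some s →
    subtreeAt pi D = some d → subtreeAt pi' Δh = some δh →
    IsConstructionIn Ru' δh.rootGraph δh.rootTok →
    ∃ Cset : Set (PreGraph V A L × V),
      (∀ pv ∈ Cset, IsConstruction Ip pv.1 pv.2) ∧
      TCSatisfies leI ⟨d.rootGraph, d.rootTok, δh.rootGraph, δh.rootTok, Cset⟩ s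

/-- The pattern `(ph, vh)` (a construction in the pattern space `Ps'` for `Ru'`) is a partial
`L`-transformation of the construction `(g, t)`. -/
def IsPartialLTransformation (Ru Ru' Ip Ps' : CSpace V A L) (Δ Δ' : DTree V A L)
    (Lm : List ℕ → List ℕ → Option (TConstraint V A L))
    (g : PreGraph V A L) (t : V) (ph : PreGraph V A L) (vh : V) : Prop :=
  (∃ D, IsDecompositionOf Ru D g t ∧ DecompositionMatches Ru.le D Δ) ∧
  (∃ Δh, IsDecompositionOf Ps' Δh ph vh ∧ DecompositionMatches Ru'.le Δh Δ') ∧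
  ∀ D Δh, IsDecompositionOf Ru D g t → DecompositionMatches Ru.le D Δ →
    IsDecompositionOf Ps' Δh ph vh → DecompositionMatches Ru'.le Δh Δ' →
    LPartialSatisfiedBy Ip.le Ip Ru' Lm D Δh

/-! ## Validity, soundness, leaf instantiation -/

/-- Validity of `Lm` for `(g, t)` and `(p, v)` at the pair of vertices `(pi, pi')`. -/
def ValidAt (Ru Ru' Ip Ps' : CSpace V A L) (Δ Δ' : DTree V A L)
    (Lm : List ℕ → List ℕ → Option (TConstraint V A L))
    (g : PreGraph V A L) (t : V) (p : PreGraph V A L) (v : V)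
    (pi pi' : List ℕ) : Prop :=
  ∀ D Δh Dsub Δhsub Δsub Δsub',
    IsDecompositionOf Ru D g t → DecompositionMatches Ru.le D Δ →
    IsDecompositionOf Ps' Δh p v → DecompositionMatches Ru'.le Δh Δ' →
    subtreeAt pi D = some Dsub → subtreeAt pi' Δh = some Δhsub →
    subtreeAt pi Δ = some Δsub → subtreeAt pi' Δ' = some Δsub' →
    IsConstructionIn Ru' Δhsub.ctGraph Δhsub.rootTok →
    IsStructuralLTransformation Ru Ru' Ip Δsub Δsub'
      (fun σ σ' => Lm (pi ++ σ) (pi' ++ σ'))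
      Dsub.ctGraph Dsub.rootTok Δhsub.ctGraph Δhsub.rootTok

/-- Ancestor-validity: validity at every pair of proper descendants-in-the-tree
("ancestors" in the paper's in-tree terminology). -/
def AncestorValidAt (Ru Ru' Ip Ps' : CSpace V A L) (Δ Δ' : DTree V A L)
    (Lm : List ℕ → List ℕ → Option (TConstraint V A L))
    (g : PreGraph V A L) (t : V) (p : PreGraph V A L) (v : V)
    (pi pi' : List ℕ) : Prop :=
  ∀ σ σ' : List ℕ, σ ≠ [] → σ' ≠ [] →
    (∃ d, subtreeAt (pi ++ σ) Δ = some d) → (∃ d', subtreeAt (pi' ++ σ') Δ' = some d') →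
    ValidAt Ru Ru' Ip Ps' Δ Δ' Lm g t p v (pi ++ σ) (pi' ++ σ')

/-- Soundness of a constraint assignment. -/
def SoundAssignment (Ru Ru' Ip Ps' : CSpace V A L) (Δ Δ' : DTree V A L)
    (Lm : List ℕ → List ℕ → Option (TConstraint V A L)) : Prop :=
  ∀ g t, IsConstructionIn Ru g t →
    (∃ D, IsDecompositionOf Ru D g t ∧ DecompositionMatches Ru.le D Δ) →
    ∀ p v, IsConstruction Ps' p v →
      (∃ Δh, IsDecompositionOf Ps' Δh p v ∧ DecompositionMatches Ru'.le Δh Δ') →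
      ∀ pi pi', (∃ d, subtreeAt pi Δ = some d) → (∃ d', subtreeAt pi' Δ' = some d') →
        AncestorValidAt Ru Ru' Ip Ps' Δ Δ' Lm g t p v pi pi' →
        ValidAt Ru Ru' Ip Ps' Δ Δ' Lm g t p v pi pi'

/-- The pattern `(p, v)` leaf-instantiates `Δ'`: it matches `Δ'` and every leaf of its
`Δ'`-canonical decomposition is labelled by a construction in `Ru'`. -/
def LeafInstantiates (Ru' Ps' : CSpace V A L) (Δ' : DTree V A L)
    (p : PreGraph V A L) (v : V) : Prop :=
  (∃ Δh, IsDecompositionOf Ps' Δh p v ∧ DecompositionMatches Ru'.le Δh Δ') ∧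
  ∀ Δh, IsDecompositionOf Ps' Δh p v → DecompositionMatches Ru'.le Δh Δ' →
    ∀ pi δh, subtreeAt pi Δh = some δh → δh.kids = [] →
      IsConstructionIn Ru' δh.rootGraph δh.rootTok

/-- A complete extension of a pattern `(p, v)` that leaf-instantiates `Δ'`. -/
def CompleteExtension (Ru' Ps' : CSpace V A L) (Δ' : DTree V A L)
    (p : PreGraph V A L) (v : V) (g' : PreGraph V A L) (t' : V) : Prop :=
  IsConstructionIn Ru' g' t' ∧
  ∃ fv fa, IsEmbedding Ru'.le g' p fv fa ∧ fv t' = v ∧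
    ∀ Δh, IsDecompositionOf Ps' Δh p v → DecompositionMatches Ru'.le Δh Δ' →
      ∀ pi δh, subtreeAt pi Δh = some δh → δh.kids = [] →
        ∀ x ∈ δh.rootGraph.Tk, x ∈ g'.Tk ∧ fv x = x

/-- `(g, t)` and `(p, v)` are valid at the leaves of `Δ` and `Δ'`. -/
def ValidAtLeaves (Ru Ru' Ip Ps' : CSpace V A L) (Δ Δ' : DTree V A L)
    (Lm : List ℕ → List ℕ → Option (TConstraint V A L))
    (g : PreGraph V A L) (t : V) (p : PreGraph V A L) (v : V) : Prop :=
  ∀ pi pi' δ δ', subtreeAt pi Δ = some δ → subtreeAt pi' Δ' = some δ' →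
    δ.kids = [] → δ'.kids = [] →
    ValidAt Ru Ru' Ip Ps' Δ Δ' Lm g t p v pi pi'


/-!
An embedding `f : g → p` is a bijection on vertices and arrows, so every subgraph `q` of `p`
has a preimage `f⁻¹ q` in `g`, and `f` restricts to an embedding `f⁻¹ q → q`. Each
ingredient of a decomposition (configurations, structure graphs, trails, trail extension
sequences and their graphs `v(TR)`, constructions and splits) is reflected by such a
restriction, trails being pulled back along the inverse of `f`. Pulling back every label of
`Δ` therefore gives a decomposition `D` of `(f⁻¹ p, f⁻¹ v) = (g, t)`, and `f` itself witnesses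
that `D` matches `Δ`.
-/

attribute [ext] PreGraph

lemma IsFunctionOn.eq {α β : Type*} {R : Set (α × β)} {D : Set α} (h : IsFunctionOn R D)
    {x : α} {y₁ y₂ : β} (hx : x ∈ D) (h₁ : (x, y₁) ∈ R) (h₂ : (x, y₂) ∈ R) : y₁ = y₂ :=
  (h.2 x hx).unique h₁ h₂

lemma IsFunctionOn.mem_of_subset {α β : Type*} {R R' : Set (α × β)} {D D' : Set α}
    (h : IsFunctionOn R D) (h' : IsFunctionOn R' D') (hR : R' ⊆ R) {x : α} {y : β}
    (hx : x ∈ D') (hxy : (x, y) ∈ R) : (x, y) ∈ R' := by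
  obtain ⟨y', hy'⟩ := (h'.2 x hx).exists
  rwa [h.eq (h.1 _ hxy) hxy (hR hy')]

lemma IsFunctionOn.of_subset {α β : Type*} {R R' : Set (α × β)} {D D' : Set α}
    (h : IsFunctionOn R D) (hR : R' ⊆ R) (hD : D' ⊆ D) (hdom : ∀ r ∈ R', r.1 ∈ D')
    (hex : ∀ x ∈ D', ∃ y, (x, y) ∈ R') : IsFunctionOn R' D' := by
  refine ⟨hdom, fun x hx => ?_⟩
  obtain ⟨y, hy⟩ := hex x hx
  exact ⟨y, hy, fun y' hy' => h.eq (hD hx) (hR hy') (hR hy)⟩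

namespace IsGraph

variable {g : PreGraph V A L}

lemma isFunctionOn_inc (hg : IsGraph g) : IsFunctionOn g.inc g.Arr := hg.2.1
lemma isFunctionOn_ia (hg : IsGraph g) : IsFunctionOn g.ia g.Arr := hg.2.2.2.1
lemma isFunctionOn_tl (hg : IsGraph g) : IsFunctionOn g.tl g.Tk := hg.2.2.2.2.1
lemma isFunctionOn_cl (hg : IsGraph g) : IsFunctionOn g.cl g.Cf := hg.2.2.2.2.2

lemma mem_arr_of_inc (hg : IsGraph g) {a : A} {x y : V} (h : (a, (x, y)) ∈ g.inc) :
    a ∈ g.Arr :=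
  hg.isFunctionOn_inc.1 _ h

lemma mem_verts_of_inc (hg : IsGraph g) {a : A} {x y : V} (h : (a, (x, y)) ∈ g.inc) :
    x ∈ g.Tk ∪ g.Cf ∧ y ∈ g.Tk ∪ g.Cf := by
  rcases hg.2.2.1 a x y h with ⟨hx, hy⟩ | ⟨hx, hy⟩
  exacts [⟨.inl hx, .inr hy⟩, ⟨.inr hx, .inl hy⟩]

lemma mem_tk_of_inc_into_cf (hg : IsGraph g) {a : A} {x u : V} (hu : u ∈ g.Cf)
    (h : (a, (x, u)) ∈ g.inc) : x ∈ g.Tk :=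
  (hg.2.2.1 a x u h).elim And.left fun h' => absurd hu (Set.disjoint_left.1 hg.1 h'.2)

lemma mem_tk_of_inc_from_cf (hg : IsGraph g) {a : A} {x u : V} (hu : u ∈ g.Cf)
    (h : (a, (u, x)) ∈ g.inc) : x ∈ g.Tk :=
  (hg.2.2.1 a u x h).elim (fun h' => absurd hu (Set.disjoint_left.1 hg.1 h'.1)) And.right

end IsGraph

namespace PreGraph.Subgraph

variable {q r p : PreGraph V A L}

lemma tk (h : q.Subgraph p) : q.Tk ⊆ p.Tk := h.1
lemma cf (h : q.Subgraph p) : q.Cf ⊆ p.Cf := h.2.1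
lemma arr (h : q.Subgraph p) : q.Arr ⊆ p.Arr := h.2.2.1
lemma inc (h : q.Subgraph p) : q.inc ⊆ p.inc := h.2.2.2.1
lemma ia (h : q.Subgraph p) : q.ia ⊆ p.ia := h.2.2.2.2.1
lemma tl (h : q.Subgraph p) : q.tl ⊆ p.tl := h.2.2.2.2.2.1
lemma cl (h : q.Subgraph p) : q.cl ⊆ p.cl := h.2.2.2.2.2.2

lemma verts (h : q.Subgraph p) : q.Tk ∪ q.Cf ⊆ p.Tk ∪ p.Cf :=
  Set.union_subset_union h.tk h.cf

lemma refl (q : PreGraph V A L) : q.Subgraph q :=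
  ⟨subset_rfl, subset_rfl, subset_rfl, subset_rfl, subset_rfl, subset_rfl, subset_rfl⟩

lemma trans (h₁ : q.Subgraph r) (h₂ : r.Subgraph p) : q.Subgraph p :=
  ⟨h₁.tk.trans h₂.tk, h₁.cf.trans h₂.cf, h₁.arr.trans h₂.arr, h₁.inc.trans h₂.inc,
    h₁.ia.trans h₂.ia, h₁.tl.trans h₂.tl, h₁.cl.trans h₂.cl⟩

end PreGraph.Subgraph

lemma PreGraph.restrict_subgraph (g : PreGraph V A L) (Vs : Set V) (As : Set A) :
    (g.restrict Vs As).Subgraph g :=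
  ⟨fun _ h => h.1, fun _ h => h.1, fun _ h => h.1, fun _ h => h.1, fun _ h => h.1,
    fun _ h => h.1, fun _ h => h.1⟩

lemma PreGraph.restrict_congr {g : PreGraph V A L} (hg : IsGraph g) {Vs Vs' : Set V}
    {As As' : Set A} (hV : ∀ x ∈ g.Tk ∪ g.Cf, x ∈ Vs ↔ x ∈ Vs')
    (hA : ∀ a ∈ g.Arr, a ∈ As ↔ a ∈ As') : g.restrict Vs As = g.restrict Vs' As' := by
  ext r
  · exact and_congr_right fun hr => hV r (.inl hr)
  · exact and_congr_right fun hr => hV r (.inr hr)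
  · exact and_congr_right fun hr => hA r hr
  · exact and_congr_right fun hr => hA r.1 (hg.isFunctionOn_inc.1 r hr)
  · exact and_congr_right fun hr => hA r.1 (hg.isFunctionOn_ia.1 r hr)
  · exact and_congr_right fun hr => hV r.1 (.inl (hg.isFunctionOn_tl.1 r hr))
  · exact and_congr_right fun hr => hV r.1 (.inr (hg.isFunctionOn_cl.1 r hr))

lemma IsGraph.of_subgraph {q p : PreGraph V A L} (hp : IsGraph p) (hqp : q.Subgraph p)
    (hinc : ∀ a x y, (a, (x, y)) ∈ q.inc → a ∈ q.Arr ∧ x ∈ q.Tk ∪ q.Cf ∧ y ∈ q.Tk ∪ q.Cf)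
    (hia : ∀ r ∈ q.ia, r.1 ∈ q.Arr) (htl : ∀ r ∈ q.tl, r.1 ∈ q.Tk)
    (hcl : ∀ r ∈ q.cl, r.1 ∈ q.Cf)
    (harr : ∀ a ∈ q.Arr, (∃ r, (a, r) ∈ q.inc) ∧ ∃ n, (a, n) ∈ q.ia)
    (htk : ∀ x ∈ q.Tk, ∃ τ, (x, τ) ∈ q.tl) (hcf : ∀ u ∈ q.Cf, ∃ c, (u, c) ∈ q.cl) :
    IsGraph q := by
  have hdisj : Disjoint q.Tk q.Cf := hp.1.mono hqp.tk hqp.cf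
  have htk_of : ∀ x ∈ q.Tk ∪ q.Cf, x ∈ p.Tk → x ∈ q.Tk := fun x hx hxp =>
    hx.resolve_right fun hxq => Set.disjoint_left.1 hp.1 hxp (hqp.cf hxq)
  have hcf_of : ∀ x ∈ q.Tk ∪ q.Cf, x ∈ p.Cf → x ∈ q.Cf := fun x hx hxp =>
    hx.resolve_left fun hxq => Set.disjoint_left.1 hp.1 (hqp.tk hxq) hxp
  refine ⟨hdisj, hp.isFunctionOn_inc.of_subset hqp.inc hqp.arr
      (fun r hr => (hinc _ _ _ hr).1) fun a ha => (harr a ha).1, ?_,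
    hp.isFunctionOn_ia.of_subset hqp.ia hqp.arr hia fun a ha => (harr a ha).2,
    hp.isFunctionOn_tl.of_subset hqp.tl hqp.tk htl htk,
    hp.isFunctionOn_cl.of_subset hqp.cl hqp.cf hcl hcf⟩
  intro a x y h
  obtain ⟨-, hx, hy⟩ := hinc a x y h
  rcases hp.2.2.1 a x y (hqp.inc h) with ⟨hxp, hyp⟩ | ⟨hxp, hyp⟩
  exacts [.inl ⟨htk_of x hx hxp, hcf_of y hy hyp⟩, .inr ⟨hcf_of x hx hxp, htk_of y hy hyp⟩]

lemma IsConstruction.isGraph {Cs : CSpace V A L} {g : PreGraph V A L} {t : V}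
    (h : IsConstruction Cs g t) : IsGraph g :=
  h.2.1.1

lemma IsConstruction.mem_tk {Cs : CSpace V A L} {g : PreGraph V A L} {t : V}
    (h : IsConstruction Cs g t) : t ∈ g.Tk :=
  h.2.2.2.2.2.2.1

lemma IsConstruction.exists_trail {Cs : CSpace V A L} {g : PreGraph V A L} {t : V}
    (h : IsConstruction Cs g t) :
    ∀ x ∈ g.Tk ∪ g.Cf, ∃ tr : Trail V A, IsTrailIn g tr ∧ tr.src = x ∧ tr.tgt = t :=
  h.2.2.2.2.2.2.2

lemma UniStructured.mono {g q : PreGraph V A L} (hg : UniStructured g) (hqg : q.Subgraph g) :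
    UniStructured q := fun x hx a ha b hb ⟨w, hw⟩ ⟨w', hw'⟩ =>
  hg x (hqg.tk hx) a (hqg.arr ha) b (hqg.arr hb) ⟨w, hqg.inc hw⟩ ⟨w', hqg.inc hw'⟩

lemma ChainIn.mem_arr {g : PreGraph V A L} {l : List A} {s t : V} (h : ChainIn g l s t) :
    ∀ a ∈ l, a ∈ g.Arr := by
  induction l generalizing s with
  | nil => simp
  | cons b l ih => exact List.forall_mem_cons.2 ⟨h.1, ih h.2.choose_spec.2⟩

def Trail.SupportedIn (g : PreGraph V A L) (tr : Trail V A) : Prop :=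
  (∀ a ∈ tr.arrows, a ∈ g.Arr) ∧ tr.src ∈ g.Tk ∪ g.Cf

lemma Trail.SupportedIn.mono {q r : PreGraph V A L} {tr : Trail V A} (h : tr.SupportedIn q)
    (hqr : q.Subgraph r) : tr.SupportedIn r :=
  ⟨fun a ha => hqr.arr (h.1 a ha), hqr.verts h.2⟩

lemma TES.supportedIn {g : PreGraph V A L} (hg : IsGraph g) {tr : Trail V A}
    {S : List (Trail V A)} (h : TES g tr S) (htr : tr.SupportedIn g) :
    ∀ e ∈ S, e.SupportedIn g := by
  induction h with
  | nonext tr _ =>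
    intro e he
    rw [List.mem_singleton.1 he]
    exact ⟨by simp, htr.2⟩
  | ext tr a u ars Ss hext _ hars _ _ ih =>
    intro e he
    obtain ⟨l, hl, hel⟩ := List.mem_flatten.1 he
    obtain ⟨i, hi⟩ := List.mem_iff_getElem?.1 hl
    obtain ⟨ai, Si, hai, hSi, rfl⟩ := List.getElem?_zipWith_eq_some.1 hi
    obtain ⟨e', he', rfl⟩ := List.mem_map.1 hel
    obtain ⟨hai_arr, w, hw⟩ := (hars.2.1 ai).1 (List.mem_of_getElem? hai)
    have hext_arr : ∀ b ∈ ai :: a :: tr.arrows, b ∈ g.Arr := by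
      simp only [List.forall_mem_cons]
      exact ⟨hai_arr, hext.1, htr.1⟩
    obtain ⟨he'_arr, he'_src⟩ :=
      ih i ai w Si hai hSi hw ⟨hext_arr, (hg.mem_verts_of_inc hw).1⟩ e' he'
    refine ⟨fun b hb => ?_, he'_src⟩
    simp only [List.mem_append, List.mem_cons, List.not_mem_nil, or_false] at hb
    rcases hb with hb | rfl | rfl
    exacts [he'_arr b hb, hai_arr, hext.1]

lemma Trail.map_flatten_zipWith (fv : V → V) (fa : A → A) (a : A) (s : V) (ars : List A)
    (Ss : List (List (Trail V A))) :
    (List.flatten (List.zipWith (fun ai Si =>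
      Si.map fun e => (⟨e.arrows ++ [ai, a], e.src, s⟩ : Trail V A)) ars Ss)).map
        (Trail.map fv fa) =
    List.flatten (List.zipWith (fun ai Si =>
      Si.map fun e => (⟨e.arrows ++ [ai, fa a], e.src, fv s⟩ : Trail V A))
        (ars.map fa) (Ss.map (List.map (Trail.map fv fa)))) := by
  simp [List.map_flatten, List.map_zipWith, List.zipWith_map, Trail.map, Function.comp_def]

def SameSpec (Cs Ps : CSpace V A L) : Prop :=
  Ps.Ty = Cs.Ty ∧ Ps.le = Cs.le ∧ Ps.C = Cs.C ∧ Ps.sig = Cs.sig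

lemma SameSpec.isStructureGraph {Cs Ps : CSpace V A L} (h : SameSpec Cs Ps)
    {q : PreGraph V A L} (hq : IsStructureGraph Ps.Ty Ps.le Ps.C Ps.sig q) :
    IsStructureGraph Cs.Ty Cs.le Cs.C Cs.sig q := by
  obtain ⟨hTy, hle, hC, hsig⟩ := h
  rwa [hTy, hle, hC, hsig] at hq

lemma exists_getElem?_of_length_eq {α β : Type*} {l₁ : List α} {l₂ : List β}
    (hlen : l₁.length = l₂.length) {i : ℕ} {a : α} (h : l₁[i]? = some a) :
    ∃ b, l₂[i]? = some b :=
  ⟨l₂[i]'(hlen ▸ (List.getElem?_eq_some_iff.1 h).1),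
    List.getElem?_eq_getElem (hlen ▸ (List.getElem?_eq_some_iff.1 h).1)⟩

lemma IsSplit.subgraph_of_getElem? {Cs : CSpace V A L} {q g' : PreGraph V A L} {t : V}
    {ics : List (PreGraph V A L × V)} (h : IsSplit Cs q t g' ics) {i : ℕ}
    {gi : PreGraph V A L} {ti : V} (hi : ics[i]? = some (gi, ti)) : gi.Subgraph q := by
  obtain ⟨-, -, trs, -, hlen, hics⟩ := h
  obtain ⟨tri, htri⟩ := exists_getElem?_of_length_eq hlen hi
  obtain ⟨Si, -, hSi⟩ := hics i tri htri
  rw [hi, Option.some_inj, Prod.mk.injEq] at hSi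
  rw [hSi.1]
  exact PreGraph.restrict_subgraph _ _ _

lemma IsDecompositionOf.isConstruction {Cs : CSpace V A L} {δ : DTree V A L}
    {q : PreGraph V A L} {w : V} (h : IsDecompositionOf Cs δ q w) : IsConstruction Cs q w := by
  cases h <;> assumption

lemma IsDecompositionOf.rootTok_eq {Cs : CSpace V A L} {δ : DTree V A L}
    {q : PreGraph V A L} {w : V} (h : IsDecompositionOf Cs δ q w) : δ.rootTok = w := by
  cases h <;> rfl

lemma IsDecompositionOf.isConstruction_of_labelOf {Cs : CSpace V A L} {δ : DTree V A L}
    {q : PreGraph V A L} {w : V} (h : IsDecompositionOf Cs δ q w) {r : PreGraph V A L} {s : V}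
    (hl : LabelOf δ r s) : IsConstruction Cs r s ∧ r.Subgraph q := by
  induction h generalizing r s with
  | single q w hc =>
    cases hl with
    | root => exact ⟨hc, .refl q⟩
    | child _ _ _ _ _ _ hmem => simp at hmem
  | split q w g' ics cs _ hsplit hlen _ ih =>
    cases hl with
    | root => exact ⟨hsplit.1, hsplit.2.1⟩
    | child _ _ _ c _ _ hmem hlc =>
      obtain ⟨i, hi⟩ := List.mem_iff_getElem?.1 hmem
      obtain ⟨⟨gi, ti⟩, hpr⟩ := exists_getElem?_of_length_eq hlen hi
      obtain ⟨hr, hrgi⟩ := ih i c gi ti hi hpr hlc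
      exact ⟨hr, hrgi.trans (hsplit.subgraph_of_getElem? hpr)⟩

lemma DTree.ctGraph_subgraph {δ : DTree V A L} {p : PreGraph V A L}
    (h : ∀ r s, LabelOf δ r s → r.Subgraph p) : δ.ctGraph.Subgraph p :=
  ⟨fun _ ⟨r, s, hl, hx⟩ => (h r s hl).tk hx, fun _ ⟨r, s, hl, hx⟩ => (h r s hl).cf hx,
    fun _ ⟨r, s, hl, hx⟩ => (h r s hl).arr hx, fun _ ⟨r, s, hl, hx⟩ => (h r s hl).inc hx,
    fun _ ⟨r, s, hl, hx⟩ => (h r s hl).ia hx, fun _ ⟨r, s, hl, hx⟩ => (h r s hl).tl hx,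
    fun _ ⟨r, s, hl, hx⟩ => (h r s hl).cl hx⟩

lemma DTree.isGraph_ctGraph {δ : DTree V A L} {p : PreGraph V A L} (hp : IsGraph p)
    (h : ∀ r s, LabelOf δ r s → IsGraph r ∧ r.Subgraph p) : IsGraph δ.ctGraph := by
  refine hp.of_subgraph (DTree.ctGraph_subgraph fun r s hl => (h r s hl).2)
    (fun a x y ⟨r, s, hl, hr⟩ => ?_) (fun _ ⟨r, s, hl, hr⟩ => ⟨r, s, hl, ?_⟩)
    (fun _ ⟨r, s, hl, hr⟩ => ⟨r, s, hl, ?_⟩) (fun _ ⟨r, s, hl, hr⟩ => ⟨r, s, hl, ?_⟩)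
    (fun a ⟨r, s, hl, hr⟩ => ?_) (fun x ⟨r, s, hl, hr⟩ => ?_) (fun u ⟨r, s, hl, hr⟩ => ?_)
  all_goals have hrg := (h r s hl).1
  · obtain ⟨hx, hy⟩ := hrg.mem_verts_of_inc hr
    exact ⟨⟨r, s, hl, hrg.mem_arr_of_inc hr⟩, hx.imp (⟨r, s, hl, ·⟩) (⟨r, s, hl, ·⟩),
      hy.imp (⟨r, s, hl, ·⟩) (⟨r, s, hl, ·⟩)⟩
  · exact hrg.isFunctionOn_ia.1 _ hr
  · exact hrg.isFunctionOn_tl.1 _ hr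
  · exact hrg.isFunctionOn_cl.1 _ hr
  · obtain ⟨e, he⟩ := (hrg.isFunctionOn_inc.2 a hr).exists
    obtain ⟨n, hn⟩ := (hrg.isFunctionOn_ia.2 a hr).exists
    exact ⟨⟨e, r, s, hl, he⟩, n, r, s, hl, hn⟩
  · obtain ⟨τ, hτ⟩ := (hrg.isFunctionOn_tl.2 x hr).exists
    exact ⟨τ, r, s, hl, hτ⟩
  · obtain ⟨c, hc⟩ := (hrg.isFunctionOn_cl.2 u hr).exists
    exact ⟨c, r, s, hl, hc⟩

open Classical in
/-- A left inverse of `f` on `s`; unlike `Function.invFunOn` it needs no `Nonempty α`. -/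
noncomputable def invOn {α : Type*} (f : α → α) (s : Set α) (y : α) : α :=
  if h : ∃ x ∈ s, f x = y then h.choose else y

lemma invOn_apply {α : Type*} {f : α → α} {s : Set α} (hf : Set.InjOn f s) {x : α}
    (hx : x ∈ s) : invOn f s (f x) = x := by
  have h : ∃ x' ∈ s, f x' = f x := ⟨x, hx, rfl⟩
  rw [invOn, dif_pos h]
  exact hf h.choose_spec.1 hx h.choose_spec.2

/-- The inverse maps are part of the data so that all restrictions of an embedding pull trails
back along the same maps. -/
structure GraphEmbedding (V A : Type*) {L : Type*} (le : Set (L × L)) where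
  g : PreGraph V A L
  p : PreGraph V A L
  fv : V → V
  fa : A → A
  gv : V → V
  ga : A → A
  isGraph_g : IsGraph g
  isGraph_p : IsGraph p
  isEmbedding : IsEmbedding le g p fv fa
  gv_fv : ∀ x ∈ g.Tk ∪ g.Cf, gv (fv x) = x
  ga_fa : ∀ a ∈ g.Arr, ga (fa a) = a
  le_trans : ∀ a b c, (a, b) ∈ le → (b, c) ∈ le → (a, c) ∈ le

namespace GraphEmbedding

variable {le : Set (L × L)}

noncomputable def ofIsEmbedding {g p : PreGraph V A L} {fv : V → V} {fa : A → A}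
    (hg : IsGraph g) (hp : IsGraph p) (he : IsEmbedding le g p fv fa)
    (hle : ∀ a b c, (a, b) ∈ le → (b, c) ∈ le → (a, c) ∈ le) : GraphEmbedding V A le where
  g := g
  p := p
  fv := fv
  fa := fa
  gv := invOn fv (g.Tk ∪ g.Cf)
  ga := invOn fa g.Arr
  isGraph_g := hg
  isGraph_p := hp
  isEmbedding := he
  gv_fv _ hx := invOn_apply he.2.2.1 hx
  ga_fa _ ha := invOn_apply he.2.2.2.2.2.2.1 ha
  le_trans := hle

variable (E : GraphEmbedding V A le) {q r : PreGraph V A L} {x y z : V} {a b : A}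

lemma fv_mem_tk (hx : x ∈ E.g.Tk) : E.fv x ∈ E.p.Tk := E.isEmbedding.1 x hx
lemma fv_mem_cf (hx : x ∈ E.g.Cf) : E.fv x ∈ E.p.Cf := E.isEmbedding.2.1 x hx
lemma fv_injOn : Set.InjOn E.fv (E.g.Tk ∪ E.g.Cf) := E.isEmbedding.2.2.1
lemma exists_fv_eq_of_tk (hy : y ∈ E.p.Tk) : ∃ x ∈ E.g.Tk, E.fv x = y :=
  E.isEmbedding.2.2.2.1 y hy
lemma exists_fv_eq_of_cf (hy : y ∈ E.p.Cf) : ∃ x ∈ E.g.Cf, E.fv x = y :=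
  E.isEmbedding.2.2.2.2.1 y hy
lemma fa_mem_arr (ha : a ∈ E.g.Arr) : E.fa a ∈ E.p.Arr := E.isEmbedding.2.2.2.2.2.1 a ha
lemma fa_injOn : Set.InjOn E.fa E.g.Arr := E.isEmbedding.2.2.2.2.2.2.1
lemma exists_fa_eq (hb : b ∈ E.p.Arr) : ∃ a ∈ E.g.Arr, E.fa a = b :=
  E.isEmbedding.2.2.2.2.2.2.2.1 b hb
lemma map_inc (h : (a, (x, y)) ∈ E.g.inc) : (E.fa a, (E.fv x, E.fv y)) ∈ E.p.inc :=
  E.isEmbedding.2.2.2.2.2.2.2.2.1 a x y h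
lemma map_ia {n : ℕ} (h : (a, n) ∈ E.g.ia) : (E.fa a, n) ∈ E.p.ia :=
  E.isEmbedding.2.2.2.2.2.2.2.2.2.1 a n h
lemma map_cl {c : L} (h : (x, c) ∈ E.g.cl) : (E.fv x, c) ∈ E.p.cl :=
  E.isEmbedding.2.2.2.2.2.2.2.2.2.2.1 x c h
lemma map_tl {τ : L} (h : (x, τ) ∈ E.g.tl) : ∃ σ, (E.fv x, σ) ∈ E.p.tl ∧ (τ, σ) ∈ le :=
  E.isEmbedding.2.2.2.2.2.2.2.2.2.2.2 x τ h

lemma fv_mem_verts (hx : x ∈ E.g.Tk ∪ E.g.Cf) : E.fv x ∈ E.p.Tk ∪ E.p.Cf :=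
  hx.imp E.fv_mem_tk E.fv_mem_cf

lemma gv_mem_tk (hy : y ∈ E.p.Tk) : E.gv y ∈ E.g.Tk := by
  obtain ⟨x, hx, rfl⟩ := E.exists_fv_eq_of_tk hy
  rwa [E.gv_fv x (.inl hx)]

lemma gv_mem_cf (hy : y ∈ E.p.Cf) : E.gv y ∈ E.g.Cf := by
  obtain ⟨x, hx, rfl⟩ := E.exists_fv_eq_of_cf hy
  rwa [E.gv_fv x (.inr hx)]

lemma gv_mem_verts (hy : y ∈ E.p.Tk ∪ E.p.Cf) : E.gv y ∈ E.g.Tk ∪ E.g.Cf :=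
  hy.imp E.gv_mem_tk E.gv_mem_cf

lemma fv_gv (hy : y ∈ E.p.Tk ∪ E.p.Cf) : E.fv (E.gv y) = y := by
  obtain ⟨x, hx, rfl⟩ : ∃ x ∈ E.g.Tk ∪ E.g.Cf, E.fv x = y := by
    rcases hy with hy | hy
    · obtain ⟨x, hx, rfl⟩ := E.exists_fv_eq_of_tk hy; exact ⟨x, .inl hx, rfl⟩
    · obtain ⟨x, hx, rfl⟩ := E.exists_fv_eq_of_cf hy; exact ⟨x, .inr hx, rfl⟩
  rw [E.gv_fv x hx]

lemma ga_mem_arr (hb : b ∈ E.p.Arr) : E.ga b ∈ E.g.Arr := by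
  obtain ⟨a, ha, rfl⟩ := E.exists_fa_eq hb
  rwa [E.ga_fa a ha]

lemma fa_ga (hb : b ∈ E.p.Arr) : E.fa (E.ga b) = b := by
  obtain ⟨a, ha, rfl⟩ := E.exists_fa_eq hb
  rw [E.ga_fa a ha]

lemma ga_injOn : Set.InjOn E.ga E.p.Arr := fun b hb b' hb' h => by
  rw [← E.fa_ga hb, h, E.fa_ga hb']

lemma inc_gv (h : (b, (y, z)) ∈ E.p.inc) : (E.ga b, (E.gv y, E.gv z)) ∈ E.g.inc := by
  obtain ⟨a, ha, rfl⟩ := E.exists_fa_eq (E.isGraph_p.mem_arr_of_inc h)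
  obtain ⟨⟨x₁, x₂⟩, hx⟩ := (E.isGraph_g.isFunctionOn_inc.2 a ha).exists
  obtain ⟨hx₁, hx₂⟩ := E.isGraph_g.mem_verts_of_inc hx
  obtain ⟨rfl, rfl⟩ := Prod.ext_iff.1 (E.isGraph_p.isFunctionOn_inc.eq (E.fa_mem_arr ha) h
    (E.map_inc hx))
  rwa [E.ga_fa a ha, E.gv_fv x₁ hx₁, E.gv_fv x₂ hx₂]

lemma ia_ga {n : ℕ} (h : (b, n) ∈ E.p.ia) : (E.ga b, n) ∈ E.g.ia := by
  obtain ⟨a, ha, rfl⟩ := E.exists_fa_eq (E.isGraph_p.isFunctionOn_ia.1 _ h)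
  obtain ⟨m, hm⟩ := (E.isGraph_g.isFunctionOn_ia.2 a ha).exists
  rwa [E.ga_fa a ha, E.isGraph_p.isFunctionOn_ia.eq (E.fa_mem_arr ha) h (E.map_ia hm)]

lemma cl_gv {c : L} (h : (y, c) ∈ E.p.cl) : (E.gv y, c) ∈ E.g.cl := by
  obtain ⟨x, hx, rfl⟩ := E.exists_fv_eq_of_cf (E.isGraph_p.isFunctionOn_cl.1 _ h)
  obtain ⟨c', hc'⟩ := (E.isGraph_g.isFunctionOn_cl.2 x hx).exists
  rwa [E.gv_fv x (.inr hx), E.isGraph_p.isFunctionOn_cl.eq (E.fv_mem_cf hx) h (E.map_cl hc')]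

lemma tl_gv {σ : L} (h : (y, σ) ∈ E.p.tl) : ∃ τ, (E.gv y, τ) ∈ E.g.tl ∧ (τ, σ) ∈ le := by
  obtain ⟨x, hx, rfl⟩ := E.exists_fv_eq_of_tk (E.isGraph_p.isFunctionOn_tl.1 _ h)
  obtain ⟨τ, hτ⟩ := (E.isGraph_g.isFunctionOn_tl.2 x hx).exists
  obtain ⟨σ', hσ', hτσ'⟩ := E.map_tl hτ
  rw [E.gv_fv x (.inl hx), E.isGraph_p.isFunctionOn_tl.eq (E.fv_mem_tk hx) h hσ']
  exact ⟨τ, hτ, hτσ'⟩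

def pullback (q : PreGraph V A L) : PreGraph V A L :=
  ⟨{x | x ∈ E.g.Tk ∧ E.fv x ∈ q.Tk}, {x | x ∈ E.g.Cf ∧ E.fv x ∈ q.Cf},
   {a | a ∈ E.g.Arr ∧ E.fa a ∈ q.Arr}, {r | r ∈ E.g.inc ∧ E.fa r.1 ∈ q.Arr},
   {r | r ∈ E.g.ia ∧ E.fa r.1 ∈ q.Arr}, {r | r ∈ E.g.tl ∧ E.fv r.1 ∈ q.Tk},
   {r | r ∈ E.g.cl ∧ E.fv r.1 ∈ q.Cf}⟩

lemma pullback_subgraph (q : PreGraph V A L) : (E.pullback q).Subgraph E.g :=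
  ⟨fun _ h => h.1, fun _ h => h.1, fun _ h => h.1, fun _ h => h.1, fun _ h => h.1,
    fun _ h => h.1, fun _ h => h.1⟩

lemma pullback_mono (h : q.Subgraph r) : (E.pullback q).Subgraph (E.pullback r) :=
  ⟨fun _ hx => ⟨hx.1, h.tk hx.2⟩, fun _ hx => ⟨hx.1, h.cf hx.2⟩, fun _ hx => ⟨hx.1, h.arr hx.2⟩,
    fun _ hx => ⟨hx.1, h.arr hx.2⟩, fun _ hx => ⟨hx.1, h.arr hx.2⟩,
    fun _ hx => ⟨hx.1, h.tk hx.2⟩, fun _ hx => ⟨hx.1, h.cf hx.2⟩⟩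

lemma pullback_self : E.pullback E.p = E.g := by
  have hg := E.isGraph_g
  ext r
  · exact and_iff_left_of_imp E.fv_mem_tk
  · exact and_iff_left_of_imp E.fv_mem_cf
  · exact and_iff_left_of_imp E.fa_mem_arr
  · exact and_iff_left_of_imp fun h => E.fa_mem_arr (hg.isFunctionOn_inc.1 r h)
  · exact and_iff_left_of_imp fun h => E.fa_mem_arr (hg.isFunctionOn_ia.1 r h)
  · exact and_iff_left_of_imp fun h => E.fv_mem_tk (hg.isFunctionOn_tl.1 r h)
  · exact and_iff_left_of_imp fun h => E.fv_mem_cf (hg.isFunctionOn_cl.1 r h)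

lemma pullback_restrict (Vs : Set V) (As : Set A) :
    E.pullback (E.p.restrict Vs As) = E.g.restrict (E.fv ⁻¹' Vs) (E.fa ⁻¹' As) := by
  have hg := E.isGraph_g
  ext r
  · exact and_congr_right fun h => and_iff_right (E.fv_mem_tk h)
  · exact and_congr_right fun h => and_iff_right (E.fv_mem_cf h)
  · exact and_congr_right fun h => and_iff_right (E.fa_mem_arr h)
  · exact and_congr_right fun h => and_iff_right (E.fa_mem_arr (hg.isFunctionOn_inc.1 r h))
  · exact and_congr_right fun h => and_iff_right (E.fa_mem_arr (hg.isFunctionOn_ia.1 r h))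
  · exact and_congr_right fun h => and_iff_right (E.fv_mem_tk (hg.isFunctionOn_tl.1 r h))
  · exact and_congr_right fun h => and_iff_right (E.fv_mem_cf (hg.isFunctionOn_cl.1 r h))

lemma map_inc_of_pullback (hq : IsGraph q) (hqp : q.Subgraph E.p)
    (h : (a, (x, y)) ∈ (E.pullback q).inc) : (E.fa a, (E.fv x, E.fv y)) ∈ q.inc :=
  E.isGraph_p.isFunctionOn_inc.mem_of_subset hq.isFunctionOn_inc hqp.inc h.2 (E.map_inc h.1)

lemma mem_pullback_verts (hqp : q.Subgraph E.p) (hx : x ∈ E.g.Tk ∪ E.g.Cf)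
    (hfx : E.fv x ∈ q.Tk ∪ q.Cf) : x ∈ (E.pullback q).Tk ∪ (E.pullback q).Cf := by
  have hdisj := Set.disjoint_left.1 E.isGraph_p.1
  rcases hx with hx | hx
  · exact .inl ⟨hx, hfx.resolve_right fun h => hdisj (E.fv_mem_tk hx) (hqp.cf h)⟩
  · exact .inr ⟨hx, hfx.resolve_left fun h => hdisj (hqp.tk h) (E.fv_mem_cf hx)⟩

lemma isGraph_pullback (hq : IsGraph q) (hqp : q.Subgraph E.p) : IsGraph (E.pullback q) := by
  have hg := E.isGraph_g
  refine hg.of_subgraph (E.pullback_subgraph q) (fun a x y h => ?_)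
    (fun r h => ⟨hg.isFunctionOn_ia.1 r h.1, h.2⟩)
    (fun r h => ⟨hg.isFunctionOn_tl.1 r h.1, h.2⟩)
    (fun r h => ⟨hg.isFunctionOn_cl.1 r h.1, h.2⟩)
    (fun a ha => ?_) (fun x hx => ?_) (fun u hu => ?_)
  · obtain ⟨hx, hy⟩ := hg.mem_verts_of_inc h.1
    obtain ⟨hfx, hfy⟩ := hq.mem_verts_of_inc (E.map_inc_of_pullback hq hqp h)
    exact ⟨⟨hg.mem_arr_of_inc h.1, h.2⟩, E.mem_pullback_verts hqp hx hfx,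
      E.mem_pullback_verts hqp hy hfy⟩
  · obtain ⟨r, hr⟩ := (hg.isFunctionOn_inc.2 a ha.1).exists
    obtain ⟨n, hn⟩ := (hg.isFunctionOn_ia.2 a ha.1).exists
    exact ⟨⟨r, hr, ha.2⟩, n, hn, ha.2⟩
  · obtain ⟨τ, hτ⟩ := (hg.isFunctionOn_tl.2 x hx.1).exists
    exact ⟨τ, hτ, hx.2⟩
  · obtain ⟨c, hc⟩ := (hg.isFunctionOn_cl.2 u hu.1).exists
    exact ⟨c, hc, hu.2⟩

lemma isEmbedding_pullback (hq : IsGraph q) (hqp : q.Subgraph E.p) :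
    IsEmbedding le (E.pullback q) q E.fv E.fa := by
  have hp := E.isGraph_p
  refine ⟨fun x hx => hx.2, fun x hx => hx.2,
    E.fv_injOn.mono (E.pullback_subgraph q).verts, fun y hy => ?_, fun y hy => ?_,
    fun a ha => ha.2, E.fa_injOn.mono (E.pullback_subgraph q).arr,
    fun b hb => ?_, fun a x y h => E.map_inc_of_pullback hq hqp h,
    fun a n h => hp.isFunctionOn_ia.mem_of_subset hq.isFunctionOn_ia hqp.ia h.2 (E.map_ia h.1),
    fun u c h => hp.isFunctionOn_cl.mem_of_subset hq.isFunctionOn_cl hqp.cl h.2 (E.map_cl h.1),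
    fun x τ h => ?_⟩
  · obtain ⟨x, hx, rfl⟩ := E.exists_fv_eq_of_tk (hqp.tk hy)
    exact ⟨x, ⟨hx, hy⟩, rfl⟩
  · obtain ⟨x, hx, rfl⟩ := E.exists_fv_eq_of_cf (hqp.cf hy)
    exact ⟨x, ⟨hx, hy⟩, rfl⟩
  · obtain ⟨a, ha, rfl⟩ := E.exists_fa_eq (hqp.arr hb)
    exact ⟨a, ⟨ha, hb⟩, rfl⟩
  · obtain ⟨σ, hσ, hτσ⟩ := E.map_tl h.1
    exact ⟨σ, hp.isFunctionOn_tl.mem_of_subset hq.isFunctionOn_tl hqp.tl h.2 hσ, hτσ⟩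

def restrictTo (q : PreGraph V A L) (hq : IsGraph q) (hqp : q.Subgraph E.p) :
    GraphEmbedding V A le where
  g := E.pullback q
  p := q
  fv := E.fv
  fa := E.fa
  gv := E.gv
  ga := E.ga
  isGraph_g := E.isGraph_pullback hq hqp
  isGraph_p := hq
  isEmbedding := E.isEmbedding_pullback hq hqp
  gv_fv x hx := E.gv_fv x ((E.pullback_subgraph q).verts hx)
  ga_fa a ha := E.ga_fa a ha.1
  le_trans := E.le_trans

lemma pullback_restrictTo (hq : IsGraph q) (hqp : q.Subgraph E.p) (hrq : r.Subgraph q) :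
    (E.restrictTo q hq hqp).pullback r = E.pullback r := by
  ext s
  · exact ⟨fun h => ⟨h.1.1, h.2⟩, fun h => ⟨⟨h.1, hrq.tk h.2⟩, h.2⟩⟩
  · exact ⟨fun h => ⟨h.1.1, h.2⟩, fun h => ⟨⟨h.1, hrq.cf h.2⟩, h.2⟩⟩
  · exact ⟨fun h => ⟨h.1.1, h.2⟩, fun h => ⟨⟨h.1, hrq.arr h.2⟩, h.2⟩⟩
  · exact ⟨fun h => ⟨h.1.1, h.2⟩, fun h => ⟨⟨h.1, hrq.arr h.2⟩, h.2⟩⟩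
  · exact ⟨fun h => ⟨h.1.1, h.2⟩, fun h => ⟨⟨h.1, hrq.arr h.2⟩, h.2⟩⟩
  · exact ⟨fun h => ⟨h.1.1, h.2⟩, fun h => ⟨⟨h.1, hrq.tk h.2⟩, h.2⟩⟩
  · exact ⟨fun h => ⟨h.1.1, h.2⟩, fun h => ⟨⟨h.1, hrq.cf h.2⟩, h.2⟩⟩

lemma mem_adjTo_iff {u : V} (hu : u ∈ E.g.Tk ∪ E.g.Cf) (hx : x ∈ E.g.Tk ∪ E.g.Cf) :
    x ∈ E.g.adjTo u ↔ E.fv x ∈ E.p.adjTo (E.fv u) := by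
  simp only [PreGraph.adjTo, Set.mem_union, Set.mem_singleton_iff, Set.mem_ofPred_eq]
  constructor
  · rintro (rfl | ⟨a, ha, h⟩)
    exacts [.inl rfl, .inr ⟨E.fa a, E.fa_mem_arr ha, h.imp E.map_inc E.map_inc⟩]
  · rintro (h | ⟨b, hb, h⟩)
    · exact .inl (E.fv_injOn hx hu h)
    · have hgfx := E.gv_fv x hx
      have hgfu := E.gv_fv u hu
      refine .inr ⟨E.ga b, E.ga_mem_arr hb, ?_⟩
      rcases h with h | h
      exacts [.inl (hgfx ▸ hgfu ▸ E.inc_gv h), .inr (hgfx ▸ hgfu ▸ E.inc_gv h)]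

lemma mem_incidentArrows_iff {u : V} (hu : u ∈ E.g.Tk ∪ E.g.Cf) (ha : a ∈ E.g.Arr) :
    a ∈ E.g.incidentArrows u ↔ E.fa a ∈ E.p.incidentArrows (E.fv u) := by
  simp only [PreGraph.incidentArrows, Set.mem_ofPred_eq, ha, E.fa_mem_arr ha, true_and]
  constructor
  · rintro ⟨w, h⟩
    exact ⟨E.fv w, h.imp E.map_inc E.map_inc⟩
  · rintro ⟨w, h⟩
    have hgfa := E.ga_fa a ha
    have hgfu := E.gv_fv u hu
    refine ⟨E.gv w, ?_⟩
    rcases h with h | h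
    exacts [.inl (hgfa ▸ hgfu ▸ E.inc_gv h), .inr (hgfa ▸ hgfu ▸ E.inc_gv h)]

lemma Nh_eq_pullback {u : V} (hu : u ∈ E.g.Tk ∪ E.g.Cf) :
    E.g.Nh u = E.pullback (E.p.Nh (E.fv u)) := by
  rw [PreGraph.Nh, PreGraph.Nh, E.pullback_restrict]
  exact PreGraph.restrict_congr E.isGraph_g (fun x hx => E.mem_adjTo_iff hu hx)
    fun a ha => E.mem_incidentArrows_iff hu ha

lemma inArrowSeq_pullback {ars : List A} (hy : y ∈ E.p.Tk ∪ E.p.Cf)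
    (h : InArrowSeq E.p y ars) : InArrowSeq E.g (E.gv y) (ars.map E.ga) := by
  obtain ⟨hnd, hmem, hidx⟩ := h
  have harr : ∀ b ∈ ars, b ∈ E.p.Arr := fun b hb => ((hmem b).1 hb).1
  refine ⟨hnd.map_on fun b hb b' hb' => E.ga_injOn (harr b hb) (harr b' hb'),
    fun a => ⟨?_, ?_⟩, fun i a ha => ?_⟩
  · rw [List.mem_map]
    rintro ⟨b, hb, rfl⟩
    obtain ⟨-, w, hw⟩ := (hmem b).1 hb
    exact ⟨E.ga_mem_arr (harr b hb), E.gv w, E.inc_gv hw⟩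
  · rintro ⟨ha, w, hw⟩
    have hinc := E.map_inc hw
    rw [E.fv_gv hy] at hinc
    exact List.mem_map.2 ⟨E.fa a, (hmem _).2 ⟨E.fa_mem_arr ha, _, hinc⟩, E.ga_fa a ha⟩
  · rw [List.getElem?_map, Option.map_eq_some_iff] at ha
    obtain ⟨b, hb, rfl⟩ := ha
    exact E.ia_ga (hidx i b hb)

lemma cf_eq_singleton_gv (h : E.p.Cf = {y}) : E.g.Cf = {E.gv y} := by
  have hy : y ∈ E.p.Cf := h ▸ rfl
  have hgy : E.gv y ∈ E.g.Cf := E.gv_mem_cf hy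
  ext x
  refine ⟨fun hx => ?_, fun hx => hx ▸ hgy⟩
  have hfx : E.fv x ∈ E.p.Cf := E.fv_mem_cf hx
  rw [h, Set.mem_singleton_iff, ← E.fv_gv (.inr hy)] at hfx
  exact E.fv_injOn (.inr hx) (.inr hgy) hfx

lemma tk_eq_gv (hy : y ∈ E.p.Cf)
    (h : E.p.Tk = {v | ∃ b ∈ E.p.Arr, (b, (v, y)) ∈ E.p.inc ∨ (b, (y, v)) ∈ E.p.inc}) :
    E.g.Tk = {v | ∃ a ∈ E.g.Arr, (a, (v, E.gv y)) ∈ E.g.inc ∨ (a, (E.gv y, v)) ∈ E.g.inc} := by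
  ext x
  refine ⟨fun hx => ?_, ?_⟩
  · have hfx := E.fv_mem_tk hx
    rw [h] at hfx
    obtain ⟨b, hb, hinc⟩ := hfx
    have hgfx := E.gv_fv x (.inl hx)
    refine ⟨E.ga b, E.ga_mem_arr hb, ?_⟩
    rcases hinc with hinc | hinc
    exacts [.inl (hgfx ▸ E.inc_gv hinc), .inr (hgfx ▸ E.inc_gv hinc)]
  · rintro ⟨a, -, hinc | hinc⟩
    exacts [E.isGraph_g.mem_tk_of_inc_into_cf (E.gv_mem_cf hy) hinc,
      E.isGraph_g.mem_tk_of_inc_from_cf (E.gv_mem_cf hy) hinc]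

lemma isConfiguration_pullback {c : L} {ins : List L} {out : L}
    (h : IsConfiguration le E.p y c ins out) :
    IsConfiguration le E.g (E.gv y) c ins out := by
  obtain ⟨-, hCf, hcl, hTk, ⟨b₀, ⟨hb₀, w₀, hw₀⟩, hb₀_unique⟩, hout, ars, hars, hlen, hin⟩ := h
  have hy : y ∈ E.p.Cf := hCf ▸ rfl
  have hfgy : E.fv (E.gv y) = y := E.fv_gv (.inr hy)
  refine ⟨E.isGraph_g, E.cf_eq_singleton_gv hCf, E.cl_gv hcl, E.tk_eq_gv hy hTk, ?_, ?_,
    ars.map E.ga, E.inArrowSeq_pullback (.inr hy) hars, by simpa using hlen, ?_⟩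
  · refine ⟨E.ga b₀, ⟨E.ga_mem_arr hb₀, E.gv w₀, E.inc_gv hw₀⟩, ?_⟩
    rintro a ⟨ha, w, hw⟩
    have hinc := E.map_inc hw
    rw [hfgy] at hinc
    rw [← hb₀_unique (E.fa a) ⟨E.fa_mem_arr ha, _, hinc⟩, E.ga_fa a ha]
  · intro a ha w hw
    have hinc := E.map_inc hw
    rw [hfgy] at hinc
    obtain ⟨hia, σ, hσ, hσout⟩ := hout _ (E.fa_mem_arr ha) _ hinc
    obtain ⟨τ, hτ, hτσ⟩ := E.tl_gv hσ
    have hia' := E.ia_ga hia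
    rw [E.gv_fv w (E.isGraph_g.mem_verts_of_inc hw).2] at hτ
    rw [E.ga_fa a ha] at hia'
    exact ⟨hia', τ, hτ, E.le_trans _ _ _ hτσ hσout⟩
  · intro i a τ ha hτ
    rw [List.getElem?_map, Option.map_eq_some_iff] at ha
    obtain ⟨b, hb, rfl⟩ := ha
    obtain ⟨w, σ, hw, hσ, hστ⟩ := hin i b τ hb hτ
    obtain ⟨ρ, hρ, hρσ⟩ := E.tl_gv hσ
    exact ⟨E.gv w, ρ, E.inc_gv hw, hρ, E.le_trans _ _ _ hρσ hστ⟩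

lemma isStructureGraph_pullback {Ty C : Set L} {sig : Set (L × (List L × L))}
    (hTy : ∀ x τ, (x, τ) ∈ E.g.tl → τ ∈ Ty) (h : IsStructureGraph Ty le C sig E.p) :
    IsStructureGraph Ty le C sig E.g := by
  refine ⟨E.isGraph_g, hTy, fun u hu => ?_⟩
  obtain ⟨c, ins, out, hcl, hc, hsig, hconf⟩ := h.2.2 (E.fv u) (E.fv_mem_cf hu)
  have hgfu : E.gv (E.fv u) = u := E.gv_fv u (.inr hu)
  refine ⟨c, ins, out, hgfu ▸ E.cl_gv hcl, hc, hsig, ?_⟩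
  have hconf' : IsConfiguration le (E.pullback (E.p.Nh (E.fv u))) (E.gv (E.fv u)) c ins out :=
    (E.restrictTo _ hconf.1 (E.p.restrict_subgraph _ _)).isConfiguration_pullback hconf
  rw [E.Nh_eq_pullback (.inr hu)]
  rwa [hgfu] at hconf'

lemma chainIn_pullback {l : List A} {s t : V} (h : ChainIn E.p l s t) :
    ChainIn E.g (l.map E.ga) (E.gv s) (E.gv t) := by
  induction l generalizing s with
  | nil => exact congrArg E.gv h
  | cons b l ih =>
    obtain ⟨hb, m, hinc, hch⟩ := h
    exact ⟨E.ga_mem_arr hb, E.gv m, E.inc_gv hinc, ih hch⟩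

lemma isTrailIn_pullback {tr : Trail V A} (h : IsTrailIn E.p tr) :
    IsTrailIn E.g (tr.map E.gv E.ga) := by
  obtain ⟨hnd, hch, hsrc, htgt⟩ := h
  have harr := hch.mem_arr
  exact ⟨hnd.map_on fun b hb b' hb' => E.ga_injOn (harr b hb) (harr b' hb'),
    E.chainIn_pullback hch, E.gv_mem_verts hsrc, E.gv_mem_verts htgt⟩

lemma nonExtendable_pullback {tr : Trail V A} (hsrc : tr.src ∈ E.p.Tk ∪ E.p.Cf)
    (h : NonExtendable E.p tr) : NonExtendable E.g (tr.map E.gv E.ga) := by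
  rintro ⟨a, ha, hnot, s, hs⟩
  have hinc := E.map_inc (show (a, (s, E.gv tr.src)) ∈ E.g.inc from hs)
  rw [E.fv_gv hsrc] at hinc
  exact h ⟨E.fa a, E.fa_mem_arr ha, fun hm => hnot (List.mem_map.2 ⟨E.fa a, hm, E.ga_fa a ha⟩),
    E.fv s, hinc⟩

lemma extendableBy_pullback {tr : Trail V A} (harr : ∀ b ∈ tr.arrows, b ∈ E.p.Arr)
    (h : ExtendableBy E.p tr a) : ExtendableBy E.g (tr.map E.gv E.ga) (E.ga a) := by
  obtain ⟨ha, hnot, s, hs⟩ := h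
  refine ⟨E.ga_mem_arr ha, fun hm => hnot ?_, E.gv s, E.inc_gv hs⟩
  obtain ⟨b, hb, hba⟩ := List.mem_map.1 hm
  rwa [← E.ga_injOn (harr b hb) ha hba]

lemma tes_pullback {tr : Trail V A} {S : List (Trail V A)} (h : TES E.p tr S)
    (htr : tr.SupportedIn E.p) :
    TES E.g (tr.map E.gv E.ga) (S.map (Trail.map E.gv E.ga)) := by
  induction h with
  | nonext tr hne => exact .nonext _ (E.nonExtendable_pullback htr.2 hne)
  | ext tr a u ars Ss hext hinc hars hlen _ ih =>
    have hu := (E.isGraph_p.mem_verts_of_inc hinc).1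
    rw [Trail.map_flatten_zipWith]
    refine .ext _ (E.ga a) (E.gv u) _ _ (E.extendableBy_pullback htr.1 hext) (E.inc_gv hinc)
      (E.inArrowSeq_pullback hu hars) (by simp [hlen]) fun i ai si Si hai hSi hsi => ?_
    rw [List.getElem?_map, Option.map_eq_some_iff] at hai hSi
    obtain ⟨b, hb, rfl⟩ := hai
    obtain ⟨S₀, hS₀, rfl⟩ := hSi
    have hb_arr : b ∈ E.p.Arr := ((hars.2.1 b).1 (List.mem_of_getElem? hb)).1
    have hsi_verts := (E.isGraph_g.mem_verts_of_inc hsi).1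
    have hbinc := E.map_inc hsi
    rw [E.fa_ga hb_arr, E.fv_gv hu] at hbinc
    have hext_arr : ∀ c ∈ b :: a :: tr.arrows, c ∈ E.p.Arr := by
      simp only [List.forall_mem_cons]
      exact ⟨hb_arr, hext.1, htr.1⟩
    have := ih i b (E.fv si) S₀ hb hS₀ hbinc
      ⟨hext_arr, (E.isGraph_p.mem_verts_of_inc hbinc).1⟩
    simpa [Trail.map, E.gv_fv si hsi_verts] using this

lemma mem_trailArrowSet_map {S : List (Trail V A)} (hS : ∀ e ∈ S, e.SupportedIn E.p)
    (ha : a ∈ E.g.Arr) :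
    a ∈ trailArrowSet (S.map (Trail.map E.gv E.ga)) ↔ E.fa a ∈ trailArrowSet S := by
  constructor
  · rintro ⟨tr, htr, hatr⟩
    obtain ⟨e, he, rfl⟩ := List.mem_map.1 htr
    obtain ⟨b, hb, rfl⟩ := List.mem_map.1 hatr
    rw [E.fa_ga ((hS e he).1 b hb)]
    exact ⟨e, he, hb⟩
  · rintro ⟨e, he, hfa⟩
    exact ⟨e.map E.gv E.ga, List.mem_map_of_mem he, List.mem_map.2 ⟨E.fa a, hfa, E.ga_fa a ha⟩⟩

lemma mem_trailVertexSet_map {S : List (Trail V A)} (hS : ∀ e ∈ S, e.SupportedIn E.p)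
    (hx : x ∈ E.g.Tk ∪ E.g.Cf) :
    x ∈ trailVertexSet E.g (S.map (Trail.map E.gv E.ga)) ↔
      E.fv x ∈ trailVertexSet E.p S := by
  constructor
  · rintro (⟨a, ha, w, h⟩ | ⟨tr, htr, hnil, rfl⟩)
    · have ha_arr : a ∈ E.g.Arr := by rcases h with h | h <;> exact E.isGraph_g.mem_arr_of_inc h
      exact .inl ⟨E.fa a, (E.mem_trailArrowSet_map hS ha_arr).1 ha, E.fv w,
        h.imp E.map_inc E.map_inc⟩
    · obtain ⟨e, he, rfl⟩ := List.mem_map.1 htr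
      exact .inr ⟨e, he, List.map_eq_nil_iff.1 hnil, (E.fv_gv (hS e he).2).symm⟩
  · rintro (⟨b, hb, w, h⟩ | ⟨e, he, hnil, hsrc⟩)
    · have hb_arr : b ∈ E.p.Arr := by rcases h with h | h <;> exact E.isGraph_p.mem_arr_of_inc h
      have hb' : E.ga b ∈ trailArrowSet (S.map (Trail.map E.gv E.ga)) := by
        rwa [E.mem_trailArrowSet_map hS (E.ga_mem_arr hb_arr), E.fa_ga hb_arr]
      have hgfx := E.gv_fv x hx
      refine .inl ⟨E.ga b, hb', E.gv w, ?_⟩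
      rcases h with h | h
      exacts [.inl (hgfx ▸ E.inc_gv h), .inr (hgfx ▸ E.inc_gv h)]
    · refine .inr ⟨e.map E.gv E.ga, List.mem_map_of_mem he, by simp [Trail.map, hnil], ?_⟩
      show E.gv e.src = x
      rw [hsrc, E.gv_fv x hx]

lemma trGraph_pullback {S : List (Trail V A)} (hS : ∀ e ∈ S, e.SupportedIn E.p) :
    trGraph E.g (S.map (Trail.map E.gv E.ga)) = E.pullback (trGraph E.p S) := by
  rw [trGraph, trGraph, pullback_restrict]
  exact PreGraph.restrict_congr E.isGraph_g (fun x hx => E.mem_trailVertexSet_map hS hx)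
    fun a ha => E.mem_trailArrowSet_map hS ha

def pullbackTree : DTree V A L → DTree V A L
  | .node q w cs => .node (E.pullback q) (E.gv w) (cs.map pullbackTree)

lemma pullbackTree_node (q : PreGraph V A L) (w : V) (cs : List (DTree V A L)) :
    E.pullbackTree (.node q w cs) = .node (E.pullback q) (E.gv w) (cs.map E.pullbackTree) := by
  rw [pullbackTree]

lemma rootTok_pullbackTree (δ : DTree V A L) : (E.pullbackTree δ).rootTok = E.gv δ.rootTok := by
  obtain ⟨q, w, cs⟩ := δ
  rw [pullbackTree_node]
  rfl

lemma labelOf_pullbackTree {δ : DTree V A L} {w : V}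
    (h : LabelOf δ q w) : LabelOf (E.pullbackTree δ) (E.pullback q) (E.gv w) := by
  induction h with
  | root => rw [pullbackTree_node]; exact .root _ _ _
  | child _ _ _ c _ _ hc _ ih =>
    rw [pullbackTree_node]
    exact .child _ _ _ _ _ _ (List.mem_map_of_mem hc) ih

lemma exists_labelOf_of_labelOf_pullbackTree {δ : DTree V A L} {s : V}
    (h : LabelOf (E.pullbackTree δ) r s) :
    ∃ q w, LabelOf δ q w ∧ r = E.pullback q ∧ s = E.gv w := by
  generalize hD : E.pullbackTree δ = D at h
  induction h generalizing δ with
  | root =>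
    obtain ⟨q, w, cs⟩ := δ
    rw [pullbackTree_node, DTree.node.injEq] at hD
    obtain ⟨rfl, rfl, -⟩ := hD
    exact ⟨q, w, .root _ _ _, rfl, rfl⟩
  | child _ _ _ c _ _ hc _ ih =>
    obtain ⟨q, w, cs⟩ := δ
    rw [pullbackTree_node, DTree.node.injEq] at hD
    obtain ⟨-, -, rfl⟩ := hD
    obtain ⟨c₀, hc₀, rfl⟩ := List.mem_map.1 hc
    obtain ⟨q', w', hl, rfl, rfl⟩ := ih rfl
    exact ⟨q', w', .child _ _ _ _ _ _ hc₀ hl, rfl, rfl⟩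

lemma ctGraph_pullbackTree (δ : DTree V A L) :
    (E.pullbackTree δ).ctGraph = E.pullback δ.ctGraph := by
  ext x <;> constructor <;>
  first
  | (rintro ⟨r, s, hl, hx⟩
     obtain ⟨q, w, hl', rfl, rfl⟩ := E.exists_labelOf_of_labelOf_pullbackTree hl
     exact ⟨hx.1, q, w, hl', hx.2⟩)
  | (rintro ⟨hxg, r, s, hl, hx⟩
     exact ⟨E.pullback r, E.gv s, E.labelOf_pullbackTree hl, hxg, hx⟩)

lemma dMatches_pullbackTree {Ps : CSpace V A L} {δ : DTree V A L} {w : V}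
    (h : IsDecompositionOf Ps δ q w) (hqp : q.Subgraph E.p) :
    DMatches le E.fv E.fa (E.pullbackTree δ) δ := by
  induction h with
  | single q w hc =>
    rw [pullbackTree_node]
    exact .node _ _ _ _ _ _ (E.isEmbedding_pullback hc.isGraph hqp)
      (E.fv_gv (hqp.verts (.inl hc.mem_tk))) (by simp) (by simp)
  | split q w g' ics cs _ hsplit hlen _ ih =>
    have hg'p := hsplit.2.1.trans hqp
    rw [pullbackTree_node]
    refine .node _ _ _ _ _ _ (E.isEmbedding_pullback hsplit.1.isGraph hg'p)
      (E.fv_gv (hg'p.verts (.inl hsplit.1.mem_tk))) (by simp) fun i ci di hci hdi => ?_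
    rw [List.getElem?_map, Option.map_eq_some_iff] at hci
    obtain ⟨c, hc, rfl⟩ := hci
    obtain rfl : c = di := Option.some_inj.1 (hc.symm.trans hdi)
    obtain ⟨⟨gi, ti⟩, hpr⟩ := exists_getElem?_of_length_eq hlen hc
    exact ih i c gi ti hc hpr ((hsplit.subgraph_of_getElem? hpr).trans hqp)

end GraphEmbedding

namespace GraphEmbedding

variable {Cs Ps : CSpace V A L} (E : GraphEmbedding V A Cs.le)

lemma isConstruction_pullback (hspec : SameSpec Cs Ps) {t w : V} {q : PreGraph V A L}
    (hg : IsConstruction Cs E.g t) (hq : IsConstruction Ps q w) (hqp : q.Subgraph E.p) :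
    IsConstruction Cs (E.pullback q) (E.gv w) := by
  let F := E.restrictTo q hq.isGraph hqp
  have hsub := E.pullback_subgraph q
  obtain ⟨hgG, hgsg, hTk, hCf, hArr, huni, -, -⟩ := hg
  refine ⟨hsub.trans hgG, F.isStructureGraph_pullback (fun x τ h => hgsg.2.1 x τ (hsub.tl h))
      (hspec.isStructureGraph hq.2.1), hTk.subset hsub.tk, hCf.subset hsub.cf,
    hArr.subset hsub.arr, huni.mono hsub, F.gv_mem_tk hq.mem_tk, fun x hx => ?_⟩
  obtain ⟨tr, htr, hsrc, htgt⟩ := hq.exists_trail (E.fv x) (F.fv_mem_verts hx)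
  refine ⟨tr.map E.gv E.ga, F.isTrailIn_pullback htr, ?_, congrArg E.gv htgt⟩
  show E.gv tr.src = x
  rw [hsrc]
  exact F.gv_fv x hx

lemma isSplit_pullback (hspec : SameSpec Cs Ps) {t₀ t : V} {q g' : PreGraph V A L}
    {ics : List (PreGraph V A L × V)} (hg : IsConstruction Cs E.g t₀) (hq : IsGraph q)
    (hqp : q.Subgraph E.p) (h : IsSplit Ps q t g' ics) :
    IsSplit Cs (E.pullback q) (E.gv t) (E.pullback g')
      (ics.map fun pr => (E.pullback pr.1, E.gv pr.2)) := by
  obtain ⟨hg', hg'q, trs, htes, hlen, hics⟩ := h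
  have hg'p := hg'q.trans hqp
  have hnil : (Trail.nil t : Trail V A).SupportedIn g' := ⟨by simp [Trail.nil], .inl hg'.mem_tk⟩
  refine ⟨E.isConstruction_pullback hspec hg hg' hg'p, E.pullback_mono hg'q,
    trs.map (Trail.map E.gv E.ga), (E.restrictTo g' hg'.isGraph hg'p).tes_pullback htes hnil,
    by simp [hlen], fun i tri htri => ?_⟩
  rw [List.getElem?_map, Option.map_eq_some_iff] at htri
  obtain ⟨tri, htri, rfl⟩ := htri
  obtain ⟨Si, hSi, hics_i⟩ := hics i tri htri
  have htri_q := (htes.supportedIn hg'.isGraph hnil tri (List.mem_of_getElem? htri)).mono hg'q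
  let F := E.restrictTo q hq hqp
  refine ⟨Si.map (Trail.map E.gv E.ga), F.tes_pullback hSi htri_q, ?_⟩
  have htr : trGraph (E.pullback q) (Si.map (Trail.map E.gv E.ga)) =
      E.pullback (trGraph q Si) :=
    (F.trGraph_pullback (hSi.supportedIn hq htri_q)).trans
      (E.pullback_restrictTo hq hqp (PreGraph.restrict_subgraph _ _ _))
  rw [List.getElem?_map, hics_i, htr]
  rfl

lemma isDecompositionOf_pullbackTree (hspec : SameSpec Cs Ps) {t₀ : V}
    (hg : IsConstruction Cs E.g t₀) {δ : DTree V A L} {q : PreGraph V A L} {w : V}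
    (h : IsDecompositionOf Ps δ q w) (hqp : q.Subgraph E.p) :
    IsDecompositionOf Cs (E.pullbackTree δ) (E.pullback q) (E.gv w) := by
  induction h with
  | single q w hc =>
    rw [pullbackTree_node, List.map_nil]
    exact .single _ _ (E.isConstruction_pullback hspec hg hc hqp)
  | split q w g' ics cs hc hsplit hlen _ ih =>
    rw [pullbackTree_node]
    refine .split _ _ _ _ _ (E.isConstruction_pullback hspec hg hc hqp)
      (E.isSplit_pullback hspec hg hc.isGraph hqp hsplit) (by simp [hlen])
      fun i ci gi ti hci hgi => ?_
    rw [List.getElem?_map, Option.map_eq_some_iff] at hci hgi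
    obtain ⟨c, hc, rfl⟩ := hci
    obtain ⟨⟨g₀, t₀⟩, hpr, hpr'⟩ := hgi
    obtain ⟨rfl, rfl⟩ := Prod.mk.inj hpr'
    exact ih i c g₀ t₀ hc hpr ((hsplit.subgraph_of_getElem? hpr).trans hqp)

end GraphEmbedding

theorem matching_decomposition_exists_general {V A L : Type*}
    (Cs Ps : CSpace V A L) (hCs : IsCSpace Cs) (hPs : IsPatternSpace Cs Ps)
    (g : PreGraph V A L) (t : V) (hg : IsConstruction Cs g t)
    (p : PreGraph V A L) (v : V)
    (hm : MatchesPattern Cs.le g t p v)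
    (Δ : DTree V A L) (hΔ : IsDecompositionOf Ps Δ p v) :
    ∃ D : DTree V A L, IsDecompositionOf Cs D g t ∧ DecompositionMatches Cs.le D Δ := by
  obtain ⟨fv, fa, hemb, hfv⟩ := hm
  have hp : IsGraph p := hΔ.isConstruction.isGraph
  let E := GraphEmbedding.ofIsEmbedding hg.isGraph hp hemb hCs.1.2.2.2
  have hpp := PreGraph.Subgraph.refl p
  have hgv : E.gv v = t := by
    rw [← hfv]
    exact E.gv_fv t (.inl hg.mem_tk)
  have hpg : E.pullback p = g := E.pullback_self
  have hD := E.isDecompositionOf_pullbackTree ⟨hPs.1, hPs.2.1, hPs.2.2.1, hPs.2.2.2.1⟩ hg hΔ hpp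
  rw [hpg, hgv] at hD
  have hlabels := fun r s (hl : LabelOf Δ r s) => hΔ.isConstruction_of_labelOf hl
  refine ⟨E.pullbackTree Δ, hD, fv, fa, ?_, ?_, E.dMatches_pullbackTree hΔ hpp⟩
  · rw [E.ctGraph_pullbackTree]
    exact E.isEmbedding_pullback
      (DTree.isGraph_ctGraph hp fun r s hl => ⟨(hlabels r s hl).1.isGraph, (hlabels r s hl).2⟩)
      (DTree.ctGraph_subgraph fun r s hl => (hlabels r s hl).2)
  · rw [E.rootTok_pullbackTree, hΔ.rootTok_eq, hgv]
    exact hfv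

/-- if a construction matches a pattern then every decomposition of the pattern
describes some decomposition of the construction. -/
theorem matching_decomposition_exists {V A L : Type*}
    (Cs Ps : CSpace V A L) (hCs : IsCSpace Cs) (hPs : IsPatternSpace Cs Ps)
    (g : PreGraph V A L) (t : V) (hg : IsConstruction Cs g t)
    (p : PreGraph V A L) (v : V) (hp : IsConstruction Ps p v)
    (hm : MatchesPattern Cs.le g t p v)
    (Δ : DTree V A L) (hΔ : IsDecompositionOf Ps Δ p v) :
    ∃ D : DTree V A L, IsDecompositionOf Cs D g t ∧ DecompositionMatches Cs.le D Δ :=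
  matching_decomposition_exists_general Cs Ps hCs hPs g t hg p v hm Δ hΔ

end RST
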